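/- arXiv:1910.04360 — 3 statements merged into one kernel-verified Lean document; each statement's English description precedes it below -/
import Mathlib

section
/- Let x be an element of a finite matroid M. Then dw(M / x) ≤ dw(M), where M / x denotes the matroid obtained by contracting x. -/
open scoped Classical

/-- A set-system: a finite ground set `E` together with a family `Ind` of subsets of `E`,
called the independent sets. -/
structure SetSystem (α : Type) where
  E : Finset α
  Ind : Set (Finset α)
  ind_subset : ∀ X ∈ Ind, X ⊆ E

namespace SetSystem

variable {α : Type}

/-- The relation `X ∼_U X'`: for every `Z ⊆ E − U`, `X ∪ Z` is independent iff `X' ∪ Z` is. -/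
def Eqv (S : SetSystem α) (U : Finset α) (X X' : Finset α) : Prop :=
  ∀ Z : Finset α, Z ⊆ S.E \ U → ((X ∪ Z) ∈ S.Ind ↔ (X' ∪ Z) ∈ S.Ind)

/-- `∼_U` as a setoid on the subsets of `U`. -/
def eqvSetoid (S : SetSystem α) (U : Finset α) : Setoid {X : Finset α // X ⊆ U} where
  r X X' := S.Eqv U X.1 X'.1
  iseqv := ⟨fun _ _ _ => Iff.rfl, fun h Z hZ => (h Z hZ).symm,
    fun h h' Z hZ => (h Z hZ).trans (h' Z hZ)⟩

/-- The number of equivalence classes of `∼_U` on the subsets of `U`. -/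
noncomputable def numClasses (S : SetSystem α) (U : Finset α) : ℕ :=
  Nat.card (Quotient (S.eqvSetoid U))

end SetSystem

/-- A decomposition of a finite ground set `E`: a subcubic tree (every vertex has degree
one or three) together with a bijection from `E` to the set of leaves (degree-one vertices). -/
structure Decomp (α : Type) (E : Finset α) where
  V : Type
  [fintypeV : Fintype V]
  [decEqV : DecidableEq V]
  G : SimpleGraph V
  [decAdj : DecidableRel G.Adj]
  isTree : G.IsTree
  subcubic : ∀ v : V, G.degree v = 1 ∨ G.degree v = 3
  leaf : α → V
  leaf_degree : ∀ a ∈ E, G.degree (leaf a) = 1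
  leaf_injOn : Set.InjOn leaf ↑E
  leaf_surj : ∀ v : V, G.degree v = 1 → ∃ a ∈ E, leaf a = v

namespace Decomp

attribute [instance] fintypeV decEqV decAdj

variable {α : Type} {E : Finset α}

/-- The set `U ⊆ E` is displayed by an edge `uv` of the decomposition: it consists of those
elements of `E` whose leaf lies in the component of `T − uv` containing `u`. -/
def Displays (D : Decomp α E) (U : Finset α) : Prop :=
  U ⊆ E ∧ ∃ u v : D.V, D.G.Adj u v ∧
    ∀ a ∈ E, (a ∈ U ↔ (D.G.deleteEdges {s(u, v)}).Reachable (D.leaf a) u)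

end Decomp

namespace SetSystem

variable {α : Type}

/-- The decomposition-width of a set-system: the least `k` such that some decomposition has
all displayed sets `U` with at most `k` equivalence classes under `∼_U`. -/
noncomputable def dw (S : SetSystem α) : ℕ :=
  sInf {k : ℕ | ∃ D : Decomp α S.E, ∀ U : Finset α, D.Displays U → S.numClasses U ≤ k}

end SetSystem

namespace Matroid

variable {α : Type}

/-- The set-system of independent sets of a matroid on a finite type. -/
noncomputable def toSetSystem [Fintype α] (M : Matroid α) : SetSystem α where
  E := M.E.toFinite.toFinset
  Ind := {X : Finset α | M.Indep ↑X}
  ind_subset := fun _X hX _a ha =>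
    (Set.Finite.mem_toFinset _).2 (hX.subset_ground (Finset.mem_coe.2 ha))

/-- The decomposition-width of a matroid. -/
noncomputable def dw [Fintype α] (M : Matroid α) : ℕ := M.toSetSystem.dw

/-- The rank of a set in a matroid: the largest size of an independent subset. -/
noncomputable def rank [Fintype α] (M : Matroid α) (U : Set α) : ℕ :=
  sSup {n : ℕ | ∃ X : Finset α, ↑X ⊆ U ∧ M.Indep ↑X ∧ X.card = n}

/-- The connectivity function `λ_M(U) = r(U) + r(E − U) − r(M)`. -/
noncomputable def lambda [Fintype α] (M : Matroid α) (U : Set α) : ℕ :=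
  M.rank U + M.rank (M.E \ U) - M.rank M.E

/-- The branch-width of a matroid: the least `k` such that some decomposition of the ground
set has `λ_M(U) + 1 ≤ k` for every displayed set `U`. -/
noncomputable def bw [Fintype α] (M : Matroid α) : ℕ :=
  sInf {k : ℕ | ∃ D : Decomp α M.toSetSystem.E,
    ∀ U : Finset α, D.Displays U → M.lambda ↑U + 1 ≤ k}

/-- Deletion of a set of elements from a matroid. -/
def del (M : Matroid α) (D : Set α) : Matroid α := M ↾ (M.E \ D)

/-- Contraction of a set of elements in a matroid, defined via duality. -/
def con (M : Matroid α) (C : Set α) : Matroid α := (M✶ ↾ (M.E \ C))✶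

/-- `N` is a minor of `M`: `N` is obtained from `M` by contractions and deletions. -/
def IsMinorOf (N M : Matroid α) : Prop :=
  ∃ C D : Set α, C ⊆ M.E ∧ D ⊆ M.E ∧ Disjoint C D ∧ N = (M.con C).del D

/-- A pigeonhole class of matroids: every subclass of bounded branch-width has bounded
decomposition-width. -/
def PigeonholeClass [Fintype α] (𝓜 : Set (Matroid α)) : Prop :=
  ∀ lam : ℕ, 0 < lam → ∃ ρ : ℕ, ∀ M ∈ 𝓜, M.bw ≤ lam → M.dw ≤ ρ

end Matroid

/-- A `Σ`-tree: a finite full binary tree with `Γ`-labelled vertices. -/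
inductive STree (Γ : Type) : Type
  | leaf : Γ → STree Γ
  | node : Γ → STree Γ → STree Γ → STree Γ

/-- A tree automaton with alphabet `Γ`, state set `Q`, accepting states `accept`, and
(partial) transition rules `δ0` and `δ2`. -/
structure TreeAut (Γ : Type) (Q : Type) where
  accept : Finset Q
  δ0 : Γ → Option (Finset Q)
  δ2 : Γ → Q → Q → Option (Finset Q)

namespace STree

variable {Γ : Type}

/-- The number of leaves of a tree. -/
def leafCount : STree Γ → ℕ
  | .leaf _ => 1
  | .node _ l r => l.leafCount + r.leafCount

/-- `Subtree s t` means `s` is the subtree of `t` rooted at one of the vertices of `t`. -/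
inductive Subtree : STree Γ → STree Γ → Prop
  | refl (t : STree Γ) : Subtree t t
  | left {s l r : STree Γ} {a : Γ} : Subtree s l → Subtree s (.node a l r)
  | right {s l r : STree Γ} {a : Γ} : Subtree s r → Subtree s (.node a l r)

/-- Relabel the vertices of a tree: each leaf label is transformed by `f` applied to its
left-to-right index (offset by the second argument), internal labels by `g`. -/
def relabel {Γ' : Type} (f : ℕ → Γ → Γ') (g : Γ → Γ') : STree Γ → ℕ → STree Γ'
  | .leaf a, k => .leaf (f k a)
  | .node a l r, k => .node (g a) (l.relabel f g k) (r.relabel f g (k + l.leafCount))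

end STree

namespace TreeAut

variable {Γ Q : Type}

/-- The run of a tree automaton on a `Σ`-tree, computed bottom-up: a leaf receives
`δ0` of its label, an internal vertex the union of `δ2` over pairs of states at its
children (the empty set if any needed transition is undefined). -/
noncomputable def run (A : TreeAut Γ Q) : STree Γ → Finset Q
  | .leaf a => (A.δ0 a).getD ∅
  | .node a l r =>
      if ∀ qL ∈ A.run l, ∀ qR ∈ A.run r, (A.δ2 a qL qR).isSome then
        (A.run l).biUnion fun qL => (A.run r).biUnion fun qR => (A.δ2 a qL qR).getD ∅
      else ∅

/-- The automaton accepts a tree if the set of states assigned to the root contains an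
accepting state. -/
def Accepts (A : TreeAut Γ Q) (t : STree Γ) : Prop :=
  ∃ q ∈ A.run t, q ∈ A.accept

/-- A deterministic automaton: every image of `δ0` and `δ2` is a singleton. -/
def Deterministic (A : TreeAut Γ Q) : Prop :=
  (∀ a s, A.δ0 a = some s → s.card = 1) ∧
    (∀ a q₁ q₂ s, A.δ2 a q₁ q₂ = some s → s.card = 1)

end TreeAut

/-- The alphabet `Σ ∪ Σ × {0,1}^I`. -/
abbrev EncAlph (Γ : Type) (I : Finset ℕ) : Type := Γ ⊕ Γ × ({j // j ∈ I} → Bool)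

/-- `enc(T, σ, φ, {Y_j}_{j ∈ I})`: relabel each leaf `v` of the tree with `(σ(v), s)`, where
`s(j) = 1` iff `φ⁻¹(v) ∈ Y_j`; internal vertices keep their labels. -/
noncomputable def enc {α Γ : Type} (E : Finset α) (t : STree Γ)
    (φ : {a // a ∈ E} ≃ Fin t.leafCount) (I : Finset ℕ)
    (Y : {j // j ∈ I} → Finset α) : STree (EncAlph Γ I) :=
  t.relabel
    (fun k a => Sum.inr (a, fun j =>
      if h : k < t.leafCount then
        decide ((φ.symm ⟨k, h⟩ : {a // a ∈ E}).1 ∈ Y j) else false))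
    Sum.inl 0

/-- An `I`-ary automaton: `δ0` is defined only on leaf labels from `Σ × {0,1}^I`. -/
def TreeAut.IsIary {Γ Q : Type} (I : Finset ℕ) (A : TreeAut (EncAlph Γ I) Q) : Prop :=
  ∀ a : Γ, A.δ0 (Sum.inl a) = none

/-- The set-system `M(A, T, σ, φ)` determined by an `{i}`-ary automaton `A` and a parse
tree: a subset `Y ⊆ E` is independent iff `A` accepts `enc(T, σ, φ, {Y})`. -/
noncomputable def systemOf {α Γ Q : Type} (i : ℕ) (A : TreeAut (EncAlph Γ {i}) Q)
    (E : Finset α) (t : STree Γ) (φ : {a // a ∈ E} ≃ Fin t.leafCount) : SetSystem α where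
  E := E
  Ind := {Y : Finset α | Y ⊆ E ∧ A.Accepts (enc E t φ {i} fun _ => Y)}
  ind_subset := fun _ hY => hY.1

/-- A class of set-systems is automatic: there is a single `{i}`-ary tree automaton which
recognises independence in every member, via a suitable parse tree for each member. -/
def Automatic {α : Type} (𝓜 : Set (SetSystem α)) : Prop :=
  ∃ (Γ : Type) (_ : Fintype Γ) (Q : Type) (_ : Fintype Q) (i : ℕ)
    (A : TreeAut (EncAlph Γ {i}) Q), A.IsIary {i} ∧
      ∀ S ∈ 𝓜, ∃ (t : STree Γ) (φ : {a // a ∈ S.E} ≃ Fin t.leafCount),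
        S = systemOf i A S.E t φ

/-- Formulas of counting monadic second-order logic `CMS₀`, with set variables `X_n`:
atomic formulas `Ind(X_i)`, `X_i ⊆ X_j` and `|X_i|_{p,q}`, closed under `¬`, `∧`, `∃`. -/
inductive CMS0 : Type
  | ind : ℕ → CMS0
  | subset : ℕ → ℕ → CMS0
  | card : ℕ → ℕ → ℕ → CMS0
  | not : CMS0 → CMS0
  | and : CMS0 → CMS0 → CMS0
  | ex : ℕ → CMS0 → CMS0

namespace CMS0

/-- The free variables of a `CMS₀` formula. -/
def free : CMS0 → Finset ℕ
  | .ind i => {i}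
  | .subset i j => {i, j}
  | .card i _ _ => {i}
  | .not φ => φ.free
  | .and φ ψ => φ.free ∪ ψ.free
  | .ex i φ => φ.free.erase i

/-- Satisfaction of a `CMS₀` formula by a set-system under an interpretation `θ` assigning
subsets of the ground set to variables. -/
def Sat {α : Type} (S : SetSystem α) (θ : ℕ → Finset α) : CMS0 → Prop
  | .ind i => θ i ∈ S.Ind
  | .subset i j => θ i ⊆ θ j
  | .card i p q => (θ i).card % q = p
  | .not φ => ¬ Sat S θ φ
  | .and φ ψ => Sat S θ φ ∧ Sat S θ ψ
  | .ex i φ => ∃ Y : Finset α, Y ⊆ S.E ∧ Sat S (Function.update θ i Y) φ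

end CMS0

/-!
Take a decomposition of `M` of least width. Deleting the leaf of `x` and suppressing its
neighbour, a vertex of degree three, gives a decomposition of `E - x` each of whose displayed sets
is `U - x` for a set `U` displayed before. A set `Y ⊆ E - x` is independent in `M / x` iff
`Y ∪ W` is independent in `M`, for a basis `W` of `{x}`; hence `X ↦ X ∪ (W ∩ U)` maps the
`∼_{U - x}`-classes of `M / x` injectively to the `∼_U`-classes of `M`.

If `M` has no decomposition at all, its width is the junk value `sInf ∅ = 0`. Then `M / x` has
none either, since hanging two new leaves, for `x` and some `a`, from the leaf of `a` turns a
decomposition of `M / x` into one of `M`.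
-/

namespace SimpleGraph

variable {V W : Type*} {G : SimpleGraph V} {H : SimpleGraph W}

lemma Reachable.of_forall_adj (f : V → W) (hf : ∀ ⦃a b⦄, G.Adj a b → H.Reachable (f a) (f b))
    {a b : V} (h : G.Reachable a b) : H.Reachable (f a) (f b) := by
  obtain ⟨w⟩ := h
  induction w with
  | nil => rfl
  | cons hab _ ih => exact (hf hab).trans ih

lemma Reachable.mem_iff_of_forall_adj {s : Set V} (hs : ∀ ⦃a b⦄, G.Adj a b → (a ∈ s ↔ b ∈ s))
    {a b : V} (h : G.Reachable a b) : a ∈ s ↔ b ∈ s :=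
  propext_iff.1 <| reachable_bot.1 <|
    h.of_forall_adj (H := ⊥) (· ∈ s) fun _ _ hab => reachable_bot.2 (propext (hs hab))

lemma Reachable.deleteEdges_or {p q v : V} (h : G.Reachable v p) :
    (G.deleteEdges {s(p, q)}).Reachable v p ∨ (G.deleteEdges {s(p, q)}).Reachable v q := by
  let s : Set V := {v | (G.deleteEdges {s(p, q)}).Reachable v p ∨
    (G.deleteEdges {s(p, q)}).Reachable v q}
  refine (h.mem_iff_of_forall_adj (s := s) fun a b hab => ?_).2 (.inl .rfl)
  by_cases he : s(a, b) = s(p, q)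
  · rcases Sym2.eq_iff.1 he with ⟨rfl, rfl⟩ | ⟨rfl, rfl⟩ <;> simp [s]
  · have hadj : (G.deleteEdges {s(p, q)}).Adj a b := (deleteEdges_adj ..).2 ⟨hab, he⟩
    exact or_congr ⟨hadj.reachable.symm.trans, hadj.reachable.trans⟩
      ⟨hadj.reachable.symm.trans, hadj.reachable.trans⟩

lemma IsAcyclic.not_reachable_deleteEdges (hG : G.IsAcyclic) {p q : V} (h : G.Adj p q) :
    ¬ (G.deleteEdges {s(p, q)}).Reachable p q :=
  isBridge_iff.1 (isAcyclic_iff_forall_adj_isBridge.1 hG h)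

lemma not_reachable_deleteEdges_of_forall_adj (f : W → V) (hG : G.IsAcyclic) {p q : W} {p' q' : V}
    (hpq : G.Adj p' q')
    (hf : ∀ ⦃a b⦄, (H.deleteEdges {s(p, q)}).Adj a b →
      (G.deleteEdges {s(p', q')}).Reachable (f a) (f b))
    (hp : (G.deleteEdges {s(p', q')}).Reachable (f p) p')
    (hq : (G.deleteEdges {s(p', q')}).Reachable (f q) q') :
    ¬ (H.deleteEdges {s(p, q)}).Reachable p q := fun h =>
  hG.not_reachable_deleteEdges hpq (hp.symm.trans ((h.of_forall_adj f hf).trans hq))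

lemma reachable_deleteEdges_iff_of_forall_adj (f : W → V) (hG : G.IsAcyclic) (hH : H.Connected)
    {p q : W} {p' q' : V} (hpq : G.Adj p' q')
    (hf : ∀ ⦃a b⦄, (H.deleteEdges {s(p, q)}).Adj a b →
      (G.deleteEdges {s(p', q')}).Reachable (f a) (f b))
    (hp : (G.deleteEdges {s(p', q')}).Reachable (f p) p')
    (hq : (G.deleteEdges {s(p', q')}).Reachable (f q) q') (v : W) :
    (H.deleteEdges {s(p, q)}).Reachable v p ↔ (G.deleteEdges {s(p', q')}).Reachable (f v) p' := by
  refine ⟨fun h => (h.of_forall_adj f hf).trans hp, fun h => ?_⟩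
  refine ((hH.preconnected v p).deleteEdges_or (q := q)).resolve_right fun hvq => ?_
  exact hG.not_reachable_deleteEdges hpq (h.symm.trans ((hvq.of_forall_adj f hf).trans hq))

lemma not_reachable_deleteEdges_of_adj_eq {v w z : V} (hv : ∀ y, G.Adj v y → y = w)
    (hz : z ≠ v) : ¬ (G.deleteEdges {s(v, w)}).Reachable v z := fun h => by
  have hnot {a b : V} (hab : (G.deleteEdges {s(v, w)}).Adj a b) : a ≠ v := by
    rintro rfl
    obtain ⟨hab, hne⟩ := (deleteEdges_adj ..).1 hab
    exact hne (by rw [hv b hab]; rfl)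
  exact hz ((h.mem_iff_of_forall_adj (s := {v}) fun a b hab =>
    iff_of_false (hnot hab) (hnot hab.symm)).1 rfl)

variable {ℓ u n₁ n₂ : V}

variable (G) in
structure IsPendantFork (ℓ u n₁ n₂ : V) : Prop where
  adj_leaf_iff : ∀ z, G.Adj ℓ z ↔ z = u
  adj_iff : ∀ z, G.Adj u z ↔ z = ℓ ∨ z = n₁ ∨ z = n₂
  left_ne_right : n₁ ≠ n₂
  left_ne_leaf : n₁ ≠ ℓ
  right_ne_leaf : n₂ ≠ ℓ

variable (G) in
/-- Delete the leaf `ℓ`, then suppress its neighbour `u`: the path `n₁ u n₂` becomes an edge. -/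
def pruneLeaf (ℓ u n₁ n₂ : V) : SimpleGraph {v // v ≠ ℓ ∧ v ≠ u} where
  Adj a b := G.Adj a b ∨ s(a.1, b.1) = s(n₁, n₂) ∧ a ≠ b
  symm := ⟨fun _ _ h => h.imp (fun h => h.symm) fun h => ⟨Sym2.eq_swap.trans h.1, h.2.symm⟩⟩
  loopless := ⟨fun _ h => h.elim (G.loopless.irrefl _) fun h => h.2 rfl⟩

namespace IsPendantFork

lemma adj_left (h : G.IsPendantFork ℓ u n₁ n₂) : G.Adj u n₁ := (h.adj_iff n₁).2 (by simp)

lemma adj_right (h : G.IsPendantFork ℓ u n₁ n₂) : G.Adj u n₂ := (h.adj_iff n₂).2 (by simp)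

lemma not_adj (h : G.IsPendantFork ℓ u n₁ n₂) (hG : G.IsAcyclic) : ¬ G.Adj n₁ n₂ := fun h12 =>
  have hne : ∀ {a b}, G.Adj a b → u ∈ s(a, b) → (G.deleteEdges {s(n₁, n₂)}).Adj a b :=
    fun hab hu => (deleteEdges_adj ..).2 ⟨hab, fun he => by
      rcases (Sym2.mem_iff.1 ((Set.mem_singleton_iff.1 he) ▸ hu)) with rfl | rfl
      exacts [G.loopless.irrefl _ h.adj_left, G.loopless.irrefl _ h.adj_right]⟩
  hG.not_reachable_deleteEdges h12
    ((hne h.adj_left.symm (by simp)).reachable.trans (hne h.adj_right (by simp)).reachable)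

lemma adj_of_mem (h : G.IsPendantFork ℓ u n₁ n₂) {z : V} (hz : z ∈ s(n₁, n₂)) : G.Adj u z :=
  (h.adj_iff z).2 (.inr (Sym2.mem_iff.1 hz))

lemma connected_pruneLeaf (h : G.IsPendantFork ℓ u n₁ n₂) (hG : G.Connected) :
    (G.pruneLeaf ℓ u n₁ n₂).Connected := by
  set G' := G.pruneLeaf ℓ u n₁ n₂
  let m₁ : {v // v ≠ ℓ ∧ v ≠ u} := ⟨n₁, h.left_ne_leaf, h.adj_left.ne'⟩
  -- collapsing `ℓ` and `u` onto `n₁` sends every edge of `G` to an edge or a vertex of `G'`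
  -- collapsing `ℓ` and `u` onto `n₁` sends every edge of `G` to an edge or a vertex of `G'`
  let r : V → {v // v ≠ ℓ ∧ v ≠ u} := fun v => if hv : v ≠ ℓ ∧ v ≠ u then ⟨v, hv⟩ else m₁
  have hr (v : {v // v ≠ ℓ ∧ v ≠ u}) : r v = v := dif_pos v.2
  have hr' {v : V} (hv : ¬ (v ≠ ℓ ∧ v ≠ u)) : r v = m₁ := dif_neg hv
  have hrℓ : r ℓ = m₁ := hr' (by simp)
  have hru : r u = m₁ := hr' (by simp)
  have hout {a b : V} (hab : G.Adj a b) (ha : ¬ (a ≠ ℓ ∧ a ≠ u)) : G'.Reachable (r a) (r b) := by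
    rw [hr' ha]
    obtain rfl | rfl : a = ℓ ∨ a = u := by tauto
    · rw [(h.adj_leaf_iff b).1 hab, hru]
    · rcases (h.adj_iff b).1 hab with hb | hb | hb <;> subst hb
      · rw [hrℓ]
      · rw [hr m₁]
      · rw [hr ⟨b, h.right_ne_leaf, h.adj_right.ne'⟩]
        exact Adj.reachable (.inr ⟨rfl, fun he => h.left_ne_right (congrArg Subtype.val he)⟩)
  have hf ⦃a b : V⦄ (hab : G.Adj a b) : G'.Reachable (r a) (r b) := by
    by_cases ha : a ≠ ℓ ∧ a ≠ u
    · by_cases hb : b ≠ ℓ ∧ b ≠ u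
      · rw [hr ⟨a, ha⟩, hr ⟨b, hb⟩]
        exact Adj.reachable (.inl hab)
      · exact (hout hab.symm hb).symm
    · exact hout hab ha
  exact (connected_iff _).2
    ⟨fun a b => by simpa [hr] using (hG.preconnected a.1 b.1).of_forall_adj r hf, ⟨m₁⟩⟩

lemma exists_adj_of_adj_pruneLeaf (h : G.IsPendantFork ℓ u n₁ n₂) {p q : {v // v ≠ ℓ ∧ v ≠ u}}
    (hpq : (G.pruneLeaf ℓ u n₁ n₂).Adj p q) :
    ∃ q', G.Adj p.1 q' ∧
      (∀ ⦃a b⦄, ((G.pruneLeaf ℓ u n₁ n₂).deleteEdges {s(p, q)}).Adj a b →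
        (G.deleteEdges {s(p.1, q')}).Reachable a.1 b.1) ∧
      (G.deleteEdges {s(p.1, q')}).Reachable q.1 q' := by
  -- an old edge `pq` corresponds to itself, the new edge `n₁n₂` to the edge `pu`
  have hval {a b c d : {v // v ≠ ℓ ∧ v ≠ u}} : s(a.1, b.1) = s(c.1, d.1) ↔ s(a, b) = s(c, d) :=
    (Sym2.map.injective Subtype.val_injective).eq_iff (a := s(a, b)) (b := s(c, d))
  have hthru {z : V} {a b : {v // v ≠ ℓ ∧ v ≠ u}} (he : s(z, u) = s(a.1, b.1)) : False := by
    rcases Sym2.mem_iff.1 (he ▸ Sym2.mem_mk_right z u) with h | h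
    exacts [a.2.2 h.symm, b.2.2 h.symm]
  have hdel {a b c d : V} (hab : G.Adj a b) (hne : s(a, b) ≠ s(c, d)) :
      (G.deleteEdges {s(c, d)}).Reachable a b :=
    ((deleteEdges_adj ..).2 ⟨hab, hne⟩).reachable
  rcases hpq with hpq | ⟨hpq, hne⟩
  · refine ⟨q.1, hpq, fun a b hab => ?_, .rfl⟩
    obtain ⟨hab | ⟨hab, -⟩, hne⟩ := (deleteEdges_adj ..).1 hab
    · exact hdel hab (hval.not.2 hne)
    · have hau : G.Adj a.1 u := (h.adj_of_mem (hab ▸ Sym2.mem_mk_left _ _)).symm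
      have hub : G.Adj u b.1 := h.adj_of_mem (hab ▸ Sym2.mem_mk_right _ _)
      exact (hdel hau hthru).trans (hdel hub fun he => hthru (Sym2.eq_swap.trans he))
  · have hpu : G.Adj p.1 u := (h.adj_of_mem (hpq ▸ Sym2.mem_mk_left _ _)).symm
    have hqu : G.Adj q.1 u := (h.adj_of_mem (hpq ▸ Sym2.mem_mk_right _ _)).symm
    refine ⟨u, hpu, fun a b hab => ?_,
      hdel hqu fun he => hne (Subtype.ext (Sym2.congr_left.1 he)).symm⟩
    obtain ⟨hab | ⟨hab, -⟩, hne⟩ := (deleteEdges_adj ..).1 hab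
    · exact hdel hab fun he => hthru he.symm
    · exact absurd (hval.1 (hab.trans hpq.symm)) hne

lemma isTree_pruneLeaf (h : G.IsPendantFork ℓ u n₁ n₂) (hG : G.IsTree) :
    (G.pruneLeaf ℓ u n₁ n₂).IsTree where
  connected := h.connected_pruneLeaf hG.connected
  isAcyclic := isAcyclic_iff_forall_adj_isBridge.2 fun _ _ hpq => by
    obtain ⟨q', hpq', hf, hq⟩ := h.exists_adj_of_adj_pruneLeaf hpq
    exact isBridge_iff.2 (not_reachable_deleteEdges_of_forall_adj _ hG.isAcyclic hpq' hf .rfl hq)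

lemma exists_reachable_deleteEdges_iff (h : G.IsPendantFork ℓ u n₁ n₂) (hG : G.IsTree)
    {p q : {v // v ≠ ℓ ∧ v ≠ u}} (hpq : (G.pruneLeaf ℓ u n₁ n₂).Adj p q) :
    ∃ q', G.Adj p.1 q' ∧ ∀ v, ((G.pruneLeaf ℓ u n₁ n₂).deleteEdges {s(p, q)}).Reachable v p ↔
      (G.deleteEdges {s(p.1, q')}).Reachable v.1 p.1 := by
  obtain ⟨q', hpq', hf, hq⟩ := h.exists_adj_of_adj_pruneLeaf hpq
  exact ⟨q', hpq', reachable_deleteEdges_iff_of_forall_adj _ hG.isAcyclic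
    (h.connected_pruneLeaf hG.connected) hpq' hf .rfl hq⟩

lemma mem_map_neighborFinset_pruneLeaf_iff {v : {v // v ≠ ℓ ∧ v ≠ u}}
    [Fintype ((G.pruneLeaf ℓ u n₁ n₂).neighborSet v)] {z : V} :
    z ∈ ((G.pruneLeaf ℓ u n₁ n₂).neighborFinset v).map (Function.Embedding.subtype _) ↔
      (z ≠ ℓ ∧ z ≠ u) ∧ (G.Adj v.1 z ∨ s(v.1, z) = s(n₁, n₂) ∧ v.1 ≠ z) := by
  refine Finset.mem_map.trans ⟨?_, fun ⟨hz, hadj⟩ => ⟨⟨z, hz⟩, (mem_neighborFinset ..).2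
    (hadj.imp id (And.imp_right fun h => Subtype.coe_ne_coe.1 h)), rfl⟩⟩
  rintro ⟨w, hw, rfl⟩
  exact ⟨w.2, ((mem_neighborFinset ..).1 hw).imp id (And.imp_right Subtype.coe_ne_coe.2)⟩

lemma ne_leaf_of_adj (h : G.IsPendantFork ℓ u n₁ n₂) {v z : V} (hv : v ≠ u) (hz : G.Adj v z) :
    z ≠ ℓ := by
  rintro rfl
  exact hv ((h.adj_leaf_iff v).1 hz.symm)

lemma map_neighborFinset_pruneLeaf_of_mem (h : G.IsPendantFork ℓ u n₁ n₂)
    {v : {v // v ≠ ℓ ∧ v ≠ u}} [Fintype ((G.pruneLeaf ℓ u n₁ n₂).neighborSet v)]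
    [Fintype (G.neighborSet v.1)] {n : V} (hn : s(n₁, n₂) = s(v.1, n)) :
    ((G.pruneLeaf ℓ u n₁ n₂).neighborFinset v).map (Function.Embedding.subtype _) =
      insert n ((G.neighborFinset v.1).erase u) := by
  have hn₂ : n ∈ s(n₁, n₂) := by rw [hn]; exact Sym2.mem_mk_right _ _
  have hnℓ : n ≠ ℓ := by
    rcases Sym2.mem_iff.1 hn₂ with rfl | rfl
    exacts [h.left_ne_leaf, h.right_ne_leaf]
  have hvn : v.1 ≠ n := by
    rintro rfl
    have h₁ : n₁ ∈ s(v.1, v.1) := hn ▸ Sym2.mem_mk_left _ _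
    have h₂ : n₂ ∈ s(v.1, v.1) := hn ▸ Sym2.mem_mk_right _ _
    simp only [Sym2.mem_iff, or_self] at h₁ h₂
    exact h.left_ne_right (h₁.trans h₂.symm)
  ext z
  simp only [mem_map_neighborFinset_pruneLeaf_iff, Finset.mem_insert, Finset.mem_erase,
    mem_neighborFinset, hn, Sym2.congr_right]
  constructor
  · rintro ⟨⟨-, hzu⟩, hz | ⟨rfl, -⟩⟩
    exacts [.inr ⟨hzu, hz⟩, .inl rfl]
  · rintro (rfl | ⟨hzu, hz⟩)
    exacts [⟨⟨hnℓ, (h.adj_of_mem hn₂).ne'⟩, .inr ⟨rfl, hvn⟩⟩,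
      ⟨⟨h.ne_leaf_of_adj v.2.2 hz, hzu⟩, .inl hz⟩]

lemma map_neighborFinset_pruneLeaf_of_notMem (h : G.IsPendantFork ℓ u n₁ n₂)
    {v : {v // v ≠ ℓ ∧ v ≠ u}} [Fintype ((G.pruneLeaf ℓ u n₁ n₂).neighborSet v)]
    [Fintype (G.neighborSet v.1)] (hv : v.1 ∉ s(n₁, n₂)) :
    ((G.pruneLeaf ℓ u n₁ n₂).neighborFinset v).map (Function.Embedding.subtype _) =
      G.neighborFinset v.1 := by
  ext z
  rw [mem_map_neighborFinset_pruneLeaf_iff, mem_neighborFinset]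
  refine ⟨fun hz => hz.2.resolve_right fun he => hv (he.1 ▸ Sym2.mem_mk_left _ _),
    fun hz => ⟨⟨h.ne_leaf_of_adj v.2.2 hz, ?_⟩, .inl hz⟩⟩
  rintro rfl
  rcases (h.adj_iff v.1).1 hz.symm with h' | h'
  exacts [v.2.1 h', hv (Sym2.mem_iff.2 h')]

lemma degree_pruneLeaf (h : G.IsPendantFork ℓ u n₁ n₂) (hG : G.IsAcyclic)
    (v : {v // v ≠ ℓ ∧ v ≠ u}) [Fintype ((G.pruneLeaf ℓ u n₁ n₂).neighborSet v)]
    [Fintype (G.neighborSet v.1)] : (G.pruneLeaf ℓ u n₁ n₂).degree v = G.degree v.1 := by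
  rw [← card_neighborFinset_eq_degree, ← card_neighborFinset_eq_degree,
    ← Finset.card_map (Function.Embedding.subtype _)]
  by_cases hv : v.1 ∈ s(n₁, n₂)
  · obtain ⟨n, hn⟩ := Sym2.mem_iff_exists.1 hv
    have hu : u ∈ G.neighborFinset v.1 := (mem_neighborFinset ..).2 (h.adj_of_mem hv).symm
    have hnu : n ∉ (G.neighborFinset v.1).erase u := fun hmem => h.not_adj hG <| by
      rw [← mem_edgeSet, hn, mem_edgeSet, ← mem_neighborFinset]
      exact Finset.mem_of_mem_erase hmem
    rw [h.map_neighborFinset_pruneLeaf_of_mem hn, Finset.card_insert_of_notMem hnu,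
      Finset.card_erase_add_one hu]
  · rw [h.map_neighborFinset_pruneLeaf_of_notMem hv]

end IsPendantFork

variable (G) in
def addPendantPair (w : V) : SimpleGraph (V ⊕ Bool) where
  Adj
    | .inl a, .inl b => G.Adj a b
    | .inl a, .inr _ => a = w
    | .inr _, .inl b => b = w
    | .inr _, .inr _ => False
  symm := ⟨by rintro (a | s) (b | t) h <;> simp_all [G.adj_comm]⟩
  loopless := ⟨by rintro (a | s) h <;> simp_all⟩

variable {w : V}

@[simp] lemma addPendantPair_adj_inl_inl {a b : V} :
    (G.addPendantPair w).Adj (.inl a) (.inl b) ↔ G.Adj a b := .rfl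

@[simp] lemma addPendantPair_adj_inl_inr {a : V} {t : Bool} :
    (G.addPendantPair w).Adj (.inl a) (.inr t) ↔ a = w := .rfl

@[simp] lemma addPendantPair_adj_inr_inl {b : V} {t : Bool} :
    (G.addPendantPair w).Adj (.inr t) (.inl b) ↔ b = w := .rfl

@[simp] lemma addPendantPair_not_adj_inr_inr {s t : Bool} :
    ¬ (G.addPendantPair w).Adj (.inr s) (.inr t) := id

lemma IsTree.addPendantPair (hG : G.IsTree) (w : V) : (G.addPendantPair w).IsTree where
  connected := by
    have hw : ∀ p, (G.addPendantPair w).Reachable p (.inl w) := by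
      rintro (a | t)
      · exact (hG.connected.preconnected a w).map ⟨Sum.inl, id⟩
      · exact Adj.reachable rfl
    exact (connected_iff _).2 ⟨fun p q => (hw p).trans (hw q).symm, ⟨.inl w⟩⟩
  isAcyclic := by
    refine isAcyclic_iff_forall_adj_isBridge.2 ?_
    have hpendant (t : Bool) : ∀ y, (G.addPendantPair w).Adj (.inr t) y → y = .inl w := by
      rintro (b | s) h
      exacts [congrArg _ h, h.elim]
    rintro (a | s) (b | t) hab
    · refine not_reachable_deleteEdges_of_forall_adj (Sum.elim id fun _ => w) hG.isAcyclic
        (p := Sum.inl a) (q := Sum.inl b) hab ?_ .rfl .rfl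
      rintro (c | s) (d | t) hcd <;> obtain ⟨hcd, hne⟩ := (deleteEdges_adj ..).1 hcd
      · exact Adj.reachable ((deleteEdges_adj ..).2 ⟨hcd, by simpa using hne⟩)
      · exact (show c = w from hcd) ▸ .rfl
      · exact (show d = w from hcd) ▸ .rfl
      · exact hcd.elim
    · rw [show a = w from hab, isBridge_iff, Sym2.eq_swap, reachable_comm]
      exact not_reachable_deleteEdges_of_adj_eq (hpendant t) Sum.inl_ne_inr
    · rw [show b = w from hab, isBridge_iff]
      exact not_reachable_deleteEdges_of_adj_eq (hpendant s) Sum.inl_ne_inr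
    · exact hab.elim

lemma degree_addPendantPair_inl (a : V) [Fintype ((G.addPendantPair w).neighborSet (.inl a))]
    [Fintype (G.neighborSet a)] :
    (G.addPendantPair w).degree (.inl a) = G.degree a + if a = w then 2 else 0 := by
  have : (G.addPendantPair w).neighborFinset (.inl a) =
      (G.neighborFinset a).disjSum (if a = w then Finset.univ else ∅) := by
    ext (b | t) <;> by_cases a = w <;> simp_all
  rw [← card_neighborFinset_eq_degree, this, Finset.card_disjSum, card_neighborFinset_eq_degree]
  split_ifs <;> rfl

lemma degree_addPendantPair_inr (t : Bool) [Fintype ((G.addPendantPair w).neighborSet (.inr t))] :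
    (G.addPendantPair w).degree (.inr t) = 1 := by
  rw [← card_neighborFinset_eq_degree, Finset.card_eq_one]
  exact ⟨.inl w, by ext (b | s) <;> simp⟩

lemma degree_addPendantPair_eq_one_or_three [Fintype V] [DecidableRel G.Adj]
    [DecidableRel (G.addPendantPair w).Adj] (hG : ∀ v, G.degree v = 1 ∨ G.degree v = 3)
    (hw : G.degree w = 1) (p : V ⊕ Bool) :
    (G.addPendantPair w).degree p = 1 ∨ (G.addPendantPair w).degree p = 3 := by
  rcases p with a | t
  · rw [degree_addPendantPair_inl]
    split_ifs with ha
    · simp [ha ▸ hw]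
    · simpa using hG a
  · exact .inl (degree_addPendantPair_inr t)

end SimpleGraph

namespace Decomp

open SimpleGraph

variable {α : Type} {E : Finset α} {x : α}

lemma two_le_card (D : Decomp α E) : 2 ≤ E.card := by
  set L := Finset.univ.filter fun v => D.G.degree v = 1
  have hL : L.card ≤ E.card := by
    refine (Finset.card_le_card (t := E.image D.leaf) fun v hv => ?_).trans Finset.card_image_le
    obtain ⟨a, ha, rfl⟩ := D.leaf_surj v (Finset.mem_filter.1 hv).2
    exact Finset.mem_image_of_mem _ ha
  have hdeg : ∑ v, D.G.degree v + 2 * L.card = ∑ _v : D.V, 3 := by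
    rw [Finset.card_filter, Finset.mul_sum, ← Finset.sum_add_distrib]
    refine Finset.sum_congr rfl fun v _ => ?_
    rcases D.subcubic v with h | h <;> simp [h]
  have hedges := D.isTree.card_edgeFinset
  have hV : 0 < Fintype.card D.V := Fintype.card_pos_iff.2 D.isTree.connected.nonempty
  rw [SimpleGraph.sum_degrees_eq_twice_card_edges, Finset.sum_const, Finset.card_univ,
    smul_eq_mul] at hdeg
  omega

lemma exists_isPendantFork (D : Decomp α E) (hx : x ∈ E) (h3 : 3 ≤ E.card) :
    ∃ u n₁ n₂, D.G.IsPendantFork (D.leaf x) u n₁ n₂ := by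
  set ℓ := D.leaf x
  obtain ⟨u, hℓu, hu⟩ := degree_eq_one_iff_existsUnique_adj.1 (D.leaf_degree x hx)
  have hℓ (z : D.V) : D.G.Adj ℓ z ↔ z = u := ⟨hu z, fun hz => hz ▸ hℓu⟩
  have hdeg : D.G.degree u = 3 := by
    -- otherwise the tree is the single edge `ℓu`, which has too few leaves
    refine (D.subcubic u).resolve_left fun hdeg => ?_
    obtain ⟨w, -, hw⟩ := degree_eq_one_iff_existsUnique_adj.1 hdeg
    have hclosed {a b : D.V} (hab : D.G.Adj a b) (ha : a ∈ ({ℓ, u} : Set D.V)) :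
        b ∈ ({ℓ, u} : Set D.V) := by
      rcases ha with rfl | rfl
      · exact .inr ((hℓ b).1 hab)
      · exact .inl ((hw b hab).trans (hw ℓ hℓu.symm).symm)
    have hV : (Finset.univ : Finset D.V) ⊆ {ℓ, u} := fun v _ => by
      simpa using ((D.isTree.connected.preconnected v ℓ).mem_iff_of_forall_adj
        fun a b hab => ⟨hclosed hab, hclosed hab.symm⟩).2 (.inl rfl)
    have := (Finset.card_le_card_of_injOn D.leaf (fun a _ => Finset.mem_univ _)
      D.leaf_injOn).trans ((Finset.card_le_card hV).trans Finset.card_le_two)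
    omega
  have hcard : ((D.G.neighborFinset u).erase ℓ).card = 2 := by
    rw [Finset.card_erase_of_mem ((mem_neighborFinset ..).2 hℓu.symm),
      card_neighborFinset_eq_degree, hdeg]
  obtain ⟨n₁, n₂, hne, hN⟩ := Finset.card_eq_two.1 hcard
  have hmem (z : D.V) : z ∈ (D.G.neighborFinset u).erase ℓ ↔ z = n₁ ∨ z = n₂ := by simp [hN]
  refine ⟨u, n₁, n₂, hℓ, fun z => ?_, hne, (Finset.mem_erase.1 ((hmem n₁).2 (.inl rfl))).1,
    (Finset.mem_erase.1 ((hmem n₂).2 (.inr rfl))).1⟩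
  by_cases hz : z = ℓ
  · simpa [hz] using hℓu.symm
  · rw [← hmem, Finset.mem_erase, mem_neighborFinset]
    simp [hz]

lemma leaf_ne_of_isPendantFork (D : Decomp α E) (hx : x ∈ E) {u n₁ n₂ : D.V}
    (h : D.G.IsPendantFork (D.leaf x) u n₁ n₂) {a : α} (ha : a ∈ E.erase x) :
    D.leaf a ≠ D.leaf x ∧ D.leaf a ≠ u := by
  obtain ⟨hax, haE⟩ := Finset.mem_erase.1 ha
  refine ⟨fun he => hax (D.leaf_injOn haE hx he), fun he => ?_⟩
  obtain ⟨w, -, hw⟩ := degree_eq_one_iff_existsUnique_adj.1 (he ▸ D.leaf_degree a haE)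
  exact h.left_ne_right ((hw n₁ h.adj_left).trans (hw n₂ h.adj_right).symm)

lemma exists_decomp_erase (D : Decomp α E) (hx : x ∈ E) (h3 : 3 ≤ E.card) :
    ∃ D' : Decomp α (E.erase x), ∀ U', D'.Displays U' → ∃ U, D.Displays U ∧ U' = U.erase x := by
  obtain ⟨u, n₁, n₂, h⟩ := D.exists_isPendantFork hx h3
  let leaf' : α → {v // v ≠ D.leaf x ∧ v ≠ u} := fun a =>
    if ha : D.leaf a ≠ D.leaf x ∧ D.leaf a ≠ u then ⟨D.leaf a, ha⟩
    else ⟨n₁, h.left_ne_leaf, h.adj_left.ne'⟩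
  have hleaf' {a : α} (ha : a ∈ E.erase x) : (leaf' a).1 = D.leaf a := by
    simp only [leaf', dif_pos (D.leaf_ne_of_isPendantFork hx h ha)]
  refine ⟨{ V := {v // v ≠ D.leaf x ∧ v ≠ u}
            G := D.G.pruneLeaf (D.leaf x) u n₁ n₂
            isTree := h.isTree_pruneLeaf D.isTree
            subcubic := fun v => h.degree_pruneLeaf D.isTree.isAcyclic v ▸ D.subcubic v.1
            leaf := leaf'
            leaf_degree := fun a ha => by
              rw [h.degree_pruneLeaf D.isTree.isAcyclic, hleaf' ha]
              exact D.leaf_degree a (Finset.mem_of_mem_erase ha)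
            leaf_injOn := fun a ha b hb hab => D.leaf_injOn (Finset.mem_of_mem_erase ha)
              (Finset.mem_of_mem_erase hb) (by rw [← hleaf' ha, ← hleaf' hb, hab])
            leaf_surj := fun v hv => by
              rw [h.degree_pruneLeaf D.isTree.isAcyclic] at hv
              obtain ⟨a, ha, hav⟩ := D.leaf_surj v.1 hv
              have hax : a ≠ x := by rintro rfl; exact v.2.1 hav.symm
              exact ⟨a, Finset.mem_erase.2 ⟨hax, ha⟩, Subtype.ext
                ((hleaf' (Finset.mem_erase.2 ⟨hax, ha⟩)).trans hav)⟩ }, ?_⟩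
  rintro U' ⟨hU'E, p, q, hpq, hU'⟩
  obtain ⟨q', hpq', hside⟩ := h.exists_reachable_deleteEdges_iff D.isTree hpq
  refine ⟨E.filter fun a => (D.G.deleteEdges {s(p.1, q')}).Reachable (D.leaf a) p.1,
    ⟨Finset.filter_subset _ _, p.1, q', hpq', fun a ha => by simp [ha]⟩, ?_⟩
  ext a
  by_cases ha : a ∈ E.erase x
  · obtain ⟨hax, haE⟩ := Finset.mem_erase.1 ha
    rw [hU' a ha, hside, hleaf' ha]
    simp [hax, haE]
  · exact iff_of_false (fun h => ha (hU'E h)) fun h => ha (Finset.mem_erase.2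
      ⟨(Finset.mem_erase.1 h).1, Finset.mem_of_mem_filter _ (Finset.mem_of_mem_erase h)⟩)

lemma nonempty_of_erase (hx : x ∈ E) (D : Decomp α (E.erase x)) : Nonempty (Decomp α E) := by
  obtain ⟨a₀, ha₀⟩ := Finset.card_pos.1 (two_pos.trans_le D.two_le_card)
  obtain ⟨ha₀x, ha₀E⟩ := Finset.mem_erase.1 ha₀
  set w := D.leaf a₀
  have hw : D.G.degree w = 1 := D.leaf_degree a₀ ha₀
  let leaf' : α → D.V ⊕ Bool := fun a =>
    if a = x then .inr true else if a = a₀ then .inr false else .inl (D.leaf a)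
  have hleaf' {a : α} (hax : a ≠ x) (ha₀ : a ≠ a₀) : leaf' a = .inl (D.leaf a) := by
    simp [leaf', hax, ha₀]
  have hne {a : α} (ha : a ∈ E.erase x) (ha₀' : a ≠ a₀) : D.leaf a ≠ w :=
    fun he => ha₀' (D.leaf_injOn ha ha₀ he)
  refine ⟨{ V := D.V ⊕ Bool
            G := D.G.addPendantPair w
            isTree := D.isTree.addPendantPair w
            subcubic := degree_addPendantPair_eq_one_or_three D.subcubic hw
            leaf := leaf'
            leaf_degree := ?_
            leaf_injOn := ?_
            leaf_surj := ?_ }⟩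
  · intro a ha
    by_cases hax : a = x
    · rw [show leaf' a = .inr true from if_pos hax, degree_addPendantPair_inr]
    by_cases ha₀' : a = a₀
    · rw [show leaf' a = .inr false by simp [leaf', ha₀', ha₀x], degree_addPendantPair_inr]
    · have ha' : a ∈ E.erase x := Finset.mem_erase.2 ⟨hax, ha⟩
      rw [hleaf' hax ha₀', degree_addPendantPair_inl, if_neg (hne ha' ha₀'), add_zero]
      exact D.leaf_degree a ha'
  · intro a ha b hb hab
    simp only [leaf'] at hab
    split_ifs at hab <;> simp_all
    exact D.leaf_injOn (Finset.mem_erase.2 ⟨‹¬a = x›, ha⟩) (Finset.mem_erase.2 ⟨‹¬b = x›, hb⟩) hab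
  · rintro (c | t) hc
    · rw [degree_addPendantPair_inl] at hc
      split_ifs at hc with hcw
      · omega
      · obtain ⟨a, ha, rfl⟩ := D.leaf_surj c (by simpa using hc)
        have ha₀' : a ≠ a₀ := fun h => hcw (h ▸ rfl)
        exact ⟨a, Finset.mem_of_mem_erase ha, hleaf' (Finset.ne_of_mem_erase ha) ha₀'⟩
    · cases t
      · exact ⟨a₀, ha₀E, by simp [leaf', ha₀x]⟩
      · exact ⟨x, hx, by simp [leaf']⟩

end Decomp

namespace SetSystem

variable {α : Type}

lemma numClasses_le_card (S : SetSystem α) {U V : Finset α} (hUV : U ⊆ V) :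
    S.numClasses U ≤ Nat.card {X : Finset α // X ⊆ V} :=
  (Nat.card_le_card_of_surjective _ Quotient.mk_surjective).trans
    (Nat.card_le_card_of_injective (fun X => ⟨X.1, X.2.trans hUV⟩) fun _ _ h =>
      Subtype.ext (Subtype.mk.inj h))

lemma numClasses_inter_le {S T : SetSystem α} {W : Finset α} (hTE : T.E ⊆ S.E) (hW : W ⊆ S.E)
    (hind : ∀ Y ⊆ T.E, Y ∈ T.Ind ↔ Y ∪ W ∈ S.Ind) (U : Finset α) :
    T.numClasses (U ∩ T.E) ≤ S.numClasses U := by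
  let g : {X // X ⊆ U ∩ T.E} → {X // X ⊆ U} := fun X =>
    ⟨X.1 ∪ W ∩ U,
      Finset.union_subset (X.2.trans Finset.inter_subset_left) Finset.inter_subset_right⟩
  have hg (X X' : {X // X ⊆ U ∩ T.E}) (h : S.Eqv U (g X) (g X')) : T.Eqv (U ∩ T.E) X X' := by
    intro Z hZ
    have hsub (X : {X // X ⊆ U ∩ T.E}) : X.1 ∪ Z ⊆ T.E :=
      Finset.union_subset (X.2.trans Finset.inter_subset_right) (hZ.trans Finset.sdiff_subset)
    have hZ' : Z ∪ W \ U ⊆ S.E \ U := by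
      refine Finset.union_subset (fun a ha => ?_) (Finset.sdiff_subset_sdiff hW le_rfl)
      obtain ⟨haT, haU⟩ := Finset.mem_sdiff.1 (hZ ha)
      exact Finset.mem_sdiff.2 ⟨hTE haT, fun h => haU (Finset.mem_inter.2 ⟨h, haT⟩)⟩
    -- the part of `W` inside `U` travels with `X`, the rest with `Z`
    have heq (X : Finset α) : X ∪ W ∩ U ∪ (Z ∪ W \ U) = X ∪ Z ∪ W := by
      ext a; simp only [Finset.mem_union, Finset.mem_inter, Finset.mem_sdiff]; tauto
    rw [hind _ (hsub X), hind _ (hsub X'), ← heq, ← heq]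
    exact h _ hZ'
  refine Nat.card_le_card_of_injective (fun c => ⟦g c.out⟧) fun c c' hc => ?_
  rw [← Quotient.out_eq c, ← Quotient.out_eq c']
  exact Quotient.sound (hg _ _ (Quotient.exact hc))

lemma dw_le_dw_of_forall_decomp {S T : SetSystem α}
    (hex : Decomp α T.E → Nonempty (Decomp α S.E))
    (hle : Decomp α T.E → ∀ D : Decomp α S.E, ∃ D' : Decomp α T.E,
      ∀ U', D'.Displays U' → ∃ U, D.Displays U ∧ T.numClasses U' ≤ S.numClasses U) :
    T.dw ≤ S.dw := by
  rcases isEmpty_or_nonempty (Decomp α T.E) with hT | ⟨⟨D'⟩⟩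
  · have : {k | ∃ D : Decomp α T.E, ∀ U, D.Displays U → T.numClasses U ≤ k} = ∅ :=
      Set.eq_empty_of_forall_notMem fun _ ⟨D, _⟩ => hT.elim D
    rw [dw, this, Nat.sInf_empty]
    exact Nat.zero_le _
  · obtain ⟨D₀⟩ := hex D'
    obtain ⟨D, hD⟩ := Nat.sInf_mem (s := {k | ∃ D : Decomp α S.E, ∀ U, D.Displays U →
      S.numClasses U ≤ k}) ⟨_, D₀, fun U hU => S.numClasses_le_card hU.1⟩
    obtain ⟨D'', hD''⟩ := hle D' D
    refine Nat.sInf_le ⟨D'', fun U' hU' => ?_⟩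
    obtain ⟨U, hU, hUU'⟩ := hD'' U' hU'
    exact hUU'.trans (hD U hU)

end SetSystem

namespace Matroid

variable {α : Type}

lemma con_eq_contract (M : Matroid α) (C : Set α) : M.con C = M ／ C := rfl

variable [Fintype α]

lemma mem_toSetSystem_E {M : Matroid α} {a : α} : a ∈ M.toSetSystem.E ↔ a ∈ M.E :=
  Set.Finite.mem_toFinset _

/-- Contracting `C` adds a basis `W` of `C` to every independence test. -/
lemma exists_toSetSystem_con_ind_iff (M : Matroid α) (C : Set α) :
    ∃ W ⊆ M.toSetSystem.E, ∀ Y ⊆ (M.con C).toSetSystem.E,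
      Y ∈ (M.con C).toSetSystem.Ind ↔ Y ∪ W ∈ M.toSetSystem.Ind := by
  obtain ⟨I, hI⟩ := M.exists_isBasis' C
  lift I to Finset α using I.toFinite
  refine ⟨I, fun a ha => mem_toSetSystem_E.2 (hI.indep.subset_ground ha), fun Y hY => ?_⟩
  have hdisj : Disjoint C Y := Set.disjoint_right.2 fun a ha => (mem_toSetSystem_E.1 (hY ha)).2
  change (M.con C).Indep _ ↔ M.Indep _
  rw [con_eq_contract, hI.contract_indep_iff, Finset.coe_union]
  exact and_iff_left hdisj

end Matroid

/-- contracting an element does not increase decomposition-width. -/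
theorem statement_3 {α : Type} [Fintype α] (M : Matroid α) (x : α) (hx : x ∈ M.E) :
    (M.con {x}).dw ≤ M.dw := by
  have hxE : x ∈ M.toSetSystem.E := Matroid.mem_toSetSystem_E.2 hx
  have hE : (M.con {x}).toSetSystem.E = M.toSetSystem.E.erase x := by
    ext a
    simp [Matroid.mem_toSetSystem_E, Matroid.con_eq_contract, and_comm]
  obtain ⟨W, hW, hind⟩ := M.exists_toSetSystem_con_ind_iff {x}
  refine SetSystem.dw_le_dw_of_forall_decomp (fun D' => ?_) (fun D' D => ?_)
  · rw [hE] at D'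
    exact Decomp.nonempty_of_erase hxE D'
  · rw [hE] at D' ⊢
    have h3 : 3 ≤ M.toSetSystem.E.card := by
      have := D'.two_le_card
      rw [Finset.card_erase_of_mem hxE] at this
      omega
    obtain ⟨D'', hD''⟩ := D.exists_decomp_erase hxE h3
    refine ⟨D'', fun U' hU' => ?_⟩
    obtain ⟨U, hU, rfl⟩ := hD'' U' hU'
    refine ⟨U, hU, ?_⟩
    have hUx : U.erase x = U ∩ (M.con {x}).toSetSystem.E := by
      rw [hE, Finset.inter_erase, Finset.inter_eq_left.2 hU.1]
    rw [hUx]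
    exact SetSystem.numClasses_inter_le (hE ▸ Finset.erase_subset _ _) hW hind U
end

section
/- For every finite matroid M, dw(M) ≥ bw(M); that is, the decomposition-width of M is at least its branch-width. -/
open scoped Classical

/-! Take a basis `B'` of `E − U`, extend it to a base `B`, and extend `J = B − B'` to a basis `I`
of `U`, so that `λ(U) = |I| − |J|`. Every `Y` with `J ⊆ Y ⊆ I` completes to a base by elements
of `B' ⊆ E − U`. If `Y ∼_U Y'`, the completion of `Y` also completes `Y'` to an independent set,
so `|Y'| ≤ |Y|`; hence the sizes `|J|, …, |I|` give `λ(U) + 1` distinct classes. -/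

namespace SetSystem

variable {α : Type}

instance (U : Finset α) : Finite {X : Finset α // X ⊆ U} :=
  U.powerset.finite_toSet.subset fun _ hX => Finset.mem_powerset.2 hX

lemma Eqv.symm {S : SetSystem α} {U X X' : Finset α} (h : S.Eqv U X X') : S.Eqv U X' X :=
  fun Z hZ => (h Z hZ).symm

lemma numClasses_le_two_pow_card (S : SetSystem α) (U : Finset α) :
    S.numClasses U ≤ 2 ^ U.card :=
  calc Nat.card (Quotient (S.eqvSetoid U))
      ≤ Nat.card {X : Finset α // X ⊆ U} :=
        Nat.card_le_card_of_surjective _ Quotient.mk_surjective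
    _ = Nat.card U.powerset :=
        Nat.card_congr (Equiv.subtypeEquivRight fun _ => Finset.mem_powerset.symm)
    _ = 2 ^ U.card := by rw [Nat.card_eq_finsetCard, Finset.card_powerset]

lemma card_le_numClasses {ι : Type} (S : SetSystem α) (U : Finset α)
    (X : ι → Finset α) (hXU : ∀ i, X i ⊆ U)
    (hX : Pairwise fun i j => ¬ S.Eqv U (X i) (X j)) :
    Nat.card ι ≤ S.numClasses U :=
  Nat.card_le_card_of_injective (fun i => Quotient.mk (S.eqvSetoid U) ⟨X i, hXU i⟩)
    fun _ _ hij => by_contra fun hne => hX hne (Quotient.exact hij)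

end SetSystem

namespace Matroid

variable {α : Type} [Fintype α] {M : Matroid α}

lemma coe_toSetSystem_E (M : Matroid α) : (↑M.toSetSystem.E : Set α) = M.E :=
  Set.Finite.coe_toFinset _

lemma rank_eq_card_of_isBasis' {I : Finset α} {X : Set α} (hI : M.IsBasis' ↑I X) :
    M.rank X = I.card := by
  refine IsGreatest.csSup_eq ⟨⟨I, hI.subset, hI.indep, rfl⟩, ?_⟩
  rintro _ ⟨X', hX'X, hX', rfl⟩
  have h := (hX'.encard_le_eRk_of_subset hX'X).trans_eq hI.encard_eq_eRk.symm
  rwa [Set.encard_coe_eq_coe_finsetCard, Set.encard_coe_eq_coe_finsetCard, Nat.cast_le] at h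

lemma lambda_eq_card_sub_card {U I B B' : Finset α} (hI : M.IsBasis' ↑I ↑U)
    (hB : M.IsBase ↑B) (hB' : M.IsBasis' ↑B' (M.E \ ↑U)) (hB'B : B' ⊆ B) :
    M.lambda ↑U = I.card - (B \ B').card := by
  rw [lambda, rank_eq_card_of_isBasis' hI, rank_eq_card_of_isBasis' hB',
    rank_eq_card_of_isBasis' hB.isBasis_ground.isBasis', Finset.card_sdiff_of_subset hB'B]
  have := Finset.card_le_card hB'B
  omega

lemma exists_isBase_union_of_sdiff_subset {U B B' Y : Finset α} (hB : M.IsBase ↑B)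
    (hB' : ↑B' ⊆ M.E \ ↑U) (hY : M.Indep ↑Y) (hBY : B \ B' ⊆ Y) :
    ∃ Z ⊆ M.toSetSystem.E \ U, M.IsBase ↑(Y ∪ Z) := by
  obtain ⟨K, hK, hYK, hKYB⟩ := hY.exists_isBase_subset_union_isBase hB
  lift K to Finset α using K.toFinite
  refine ⟨K \ Y, fun e he => ?_, ?_⟩
  · obtain ⟨heK, heY⟩ := Finset.mem_sdiff.1 he
    have heB' : e ∈ B' := by
      by_contra heB'
      exact heY (hBY (Finset.mem_sdiff.2 ⟨(hKYB heK).resolve_left heY, heB'⟩))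
    rw [Finset.mem_sdiff, ← Finset.mem_coe, coe_toSetSystem_E]
    exact hB' heB'
  · rwa [Finset.union_sdiff_of_subset (Finset.coe_subset.1 hYK)]

lemma card_le_of_eqv_of_isBase {U X X' Z : Finset α} (h : M.toSetSystem.Eqv U X X')
    (hXU : X ⊆ U) (hX'U : X' ⊆ U) (hZ : Z ⊆ M.toSetSystem.E \ U)
    (hXZ : M.IsBase ↑(X ∪ Z)) :
    X'.card ≤ X.card := by
  have hX'Z : M.Indep ↑(X' ∪ Z) := (h Z hZ).1 hXZ.indep
  have hle := hX'Z.encard_le_eRank.trans_eq hXZ.encard_eq_eRank.symm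
  rw [Set.encard_coe_eq_coe_finsetCard, Set.encard_coe_eq_coe_finsetCard, Nat.cast_le] at hle
  have hdisj : ∀ {Y}, Y ⊆ U → Disjoint Y Z := fun hYU =>
    Finset.disjoint_of_subset_left hYU (Finset.disjoint_of_subset_right hZ Finset.disjoint_sdiff)
  rw [Finset.card_union_of_disjoint (hdisj hXU), Finset.card_union_of_disjoint (hdisj hX'U)]
    at hle
  omega

lemma card_eq_of_eqv_of_isBase {U X X' Z Z' : Finset α} (h : M.toSetSystem.Eqv U X X')
    (hXU : X ⊆ U) (hX'U : X' ⊆ U) (hZ : Z ⊆ M.toSetSystem.E \ U)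
    (hZ' : Z' ⊆ M.toSetSystem.E \ U) (hXZ : M.IsBase ↑(X ∪ Z))
    (hX'Z' : M.IsBase ↑(X' ∪ Z')) :
    X.card = X'.card :=
  le_antisymm (card_le_of_eqv_of_isBase h.symm hX'U hXU hZ' hX'Z')
    (card_le_of_eqv_of_isBase h hXU hX'U hZ hXZ)

lemma lambda_add_one_le_numClasses (U : Finset α) :
    M.lambda ↑U + 1 ≤ M.toSetSystem.numClasses U := by
  obtain ⟨B', hB'⟩ := M.exists_isBasis' (M.E \ ↑U)
  obtain ⟨B, hB, hB'B⟩ := hB'.indep.exists_isBase_superset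
  lift B' to Finset α using B'.toFinite
  lift B to Finset α using B.toFinite
  have hJU : ↑(B \ B') ⊆ (↑U : Set α) := fun e he => by
    rw [Finset.coe_sdiff] at he
    by_contra heU
    exact he.2 (hB'.mem_of_insert_indep ⟨hB.subset_ground he.1, heU⟩
      (hB.indep.subset (Set.insert_subset he.1 hB'B)))
  obtain ⟨I, hI, hJI⟩ :=
    (hB.indep.subset (Finset.coe_subset.2 Finset.sdiff_subset)).subset_isBasis'_of_subset hJU
  lift I to Finset α using I.toFinite
  rw [Finset.coe_subset] at hJI hB'B
  have hchain : ∀ n : Fin (I.card - (B \ B').card + 1),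
      ∃ Y, B \ B' ⊆ Y ∧ Y ⊆ I ∧ Y.card = (B \ B').card + n := fun n =>
    Finset.exists_subsuperset_card_eq hJI (by omega) (by have := Finset.card_le_card hJI; omega)
  choose Y hJY hYI hYcard using hchain
  have hYU : ∀ n, Y n ⊆ U := fun n => (hYI n).trans (Finset.coe_subset.1 hI.subset)
  choose Z hZ hYZ using fun n => exists_isBase_union_of_sdiff_subset hB hB'.subset
    (hI.indep.subset (Finset.coe_subset.2 (hYI n))) (hJY n)
  calc M.lambda ↑U + 1 = Nat.card (Fin (I.card - (B \ B').card + 1)) := by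
        simp [lambda_eq_card_sub_card hI hB hB' hB'B]
    _ ≤ M.toSetSystem.numClasses U :=
      M.toSetSystem.card_le_numClasses U Y hYU fun m n hmn h => hmn <| Fin.ext <| by
        have := card_eq_of_eqv_of_isBase h (hYU m) (hYU n) (hZ m) (hZ n) (hYZ m) (hYZ n)
        rw [hYcard, hYcard] at this
        omega

end Matroid

/-- Corollary `whaler`: decomposition-width is at least branch-width. -/
theorem statement_6 {α : Type} [Fintype α] (M : Matroid α) :
    M.bw ≤ M.dw := by
  by_cases hD : Nonempty (Decomp α M.toSetSystem.E)
  · obtain ⟨D, hD⟩ : M.dw ∈ {k | ∃ D : Decomp α M.toSetSystem.E,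
        ∀ U, D.Displays U → M.toSetSystem.numClasses U ≤ k} :=
      Nat.sInf_mem ⟨_, hD.some, fun U hU => (M.toSetSystem.numClasses_le_two_pow_card U).trans
        (Nat.pow_le_pow_right two_pos (Finset.card_le_card hU.1))⟩
    exact Nat.sInf_le ⟨D, fun U hU => (M.lambda_add_one_le_numClasses U).trans (hD U hU)⟩
  · have hbw : M.bw = 0 := Nat.sInf_eq_zero.2 <| .inr <|
      Set.eq_empty_of_forall_notMem fun _ ⟨D, _⟩ => hD ⟨D⟩
    omega
end

section
/- Let 𝓜 be a class of set-systems. If 𝓜 is automatic, then 𝓜 has bounded decomposition-width: there is an integer K such that dw(M) ≤ K for every M ∈ 𝓜. -/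
open scoped Classical

/-!
A parse tree `t` of `S = M(A, t, φ)` gives a decomposition of `S`: take the non-root vertices
of `t`, join each to its parent, and join the two children of the root to each other. Every
displayed set is then the set `L` of elements below some vertex of `t`, or its complement
`E \ L`. The set of states of `A` at that vertex depends only on `Y ∩ L`, and acceptance of `Y`
depends only on that set and on `Y \ L`. Hence `∼_L` has at most `2^|Q|` classes and `∼_{E \ L}`
at most `2^(2^|Q|)`, a bound that depends on `A` alone.
-/

namespace SetSystem

variable {α β : Type} (S : SetSystem α)

theorem numClasses_le_of_eqv {B : Type} [Finite B] {U : Finset α} (f : Finset α → B)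
    (hf : ∀ X X', X ⊆ U → X' ⊆ U → f X = f X' → S.Eqv U X X') :
    S.numClasses U ≤ Nat.card B := by
  refine Nat.card_le_card_of_injective (fun c : Quotient (S.eqvSetoid U) => f c.out.1)
    fun c c' h => ?_
  rw [← Quotient.out_eq c, ← Quotient.out_eq c']
  exact Quotient.sound (hf _ _ c.out.2 c'.out.2 h)

def IsSummary (L : Finset α) (r : Finset α → β) : Prop :=
  (∀ Y Y', Y ∩ L = Y' ∩ L → r Y = r Y') ∧
    ∀ Y Y', Y ⊆ S.E → Y' ⊆ S.E → Y \ L = Y' \ L → r Y = r Y' → (Y ∈ S.Ind ↔ Y' ∈ S.Ind)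

variable {S} {L : Finset α} {r : Finset α → β}

theorem IsSummary.numClasses_le [Finite β] (h : S.IsSummary L r) (hL : L ⊆ S.E) :
    S.numClasses L ≤ Nat.card β := by
  refine S.numClasses_le_of_eqv r fun X X' hX hX' hr Z hZ => ?_
  have hZL : ∀ a ∈ Z, a ∈ S.E ∧ a ∉ L := fun a ha => Finset.mem_sdiff.1 (hZ ha)
  refine h.2 _ _ (by grind) (by grind) (by grind) ?_
  calc r (X ∪ Z) = r X := h.1 _ _ (by grind)
    _ = r X' := hr
    _ = r (X' ∪ Z) := h.1 _ _ (by grind)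

theorem IsSummary.numClasses_sdiff_le [Finite β] (h : S.IsSummary L r) :
    S.numClasses (S.E \ L) ≤ Nat.card (β → Prop) := by
  -- an outer part `X` is classified by the summaries of the inner parts completing it
  let F (X : Finset α) (b : β) : Prop := ∃ Z ⊆ S.E \ (S.E \ L), r Z = b ∧ X ∪ Z ∈ S.Ind
  have transfer : ∀ X X', X' ⊆ S.E \ L → F X = F X' →
      ∀ Z ⊆ S.E \ (S.E \ L), X ∪ Z ∈ S.Ind → X' ∪ Z ∈ S.Ind := by
    intro X X' hX' hXX' Z hZ hXZ
    obtain ⟨Z', hZ', hrZ', hX'Z'⟩ := (congrFun hXX' (r Z)).mp ⟨Z, hZ, rfl, hXZ⟩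
    have hr : r (X' ∪ Z') = r (X' ∪ Z) :=
      calc r (X' ∪ Z') = r Z' := h.1 _ _ (by grind)
        _ = r Z := hrZ'
        _ = r (X' ∪ Z) := h.1 _ _ (by grind)
    exact (h.2 _ _ (by grind) (by grind) (by grind) hr).1 hX'Z'
  exact S.numClasses_le_of_eqv F fun X X' hX hX' hXX' Z hZ =>
    ⟨transfer X X' hX' hXX' Z hZ, transfer X' X hX hXX'.symm Z hZ⟩

theorem dw_le_of_decomp {k : ℕ} (D : Decomp α S.E)
    (h : ∀ U, D.Displays U → S.numClasses U ≤ k) : S.dw ≤ k :=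
  Nat.sInf_le ⟨D, h⟩

theorem dw_le_of_forall_subset {k : ℕ} (h : ∀ U ⊆ S.E, S.numClasses U ≤ k) : S.dw ≤ k := by
  rcases isEmpty_or_nonempty (Decomp α S.E) with hD | ⟨⟨D⟩⟩
  · have hnone : {k | ∃ D : Decomp α S.E, ∀ U, D.Displays U → S.numClasses U ≤ k} = ∅ :=
      Set.eq_empty_iff_forall_notMem.2 fun _ ⟨D, _⟩ => hD.false D
    rw [dw, hnone, Nat.sInf_empty]
    exact k.zero_le
  · exact dw_le_of_decomp D fun U hU => h U hU.1

end SetSystem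

namespace SimpleGraph

variable {V : Type} {G : SimpleGraph V} {S : Set V} {u v : V}

theorem reachable_deleteEdges_iff_notMem (hG : G.Connected) (hu : u ∉ S) (hv : v ∈ S)
    (hcross : ∀ x y, G.Adj x y → x ∉ S → y ∈ S → x = u ∧ y = v) (q : V) :
    (G.deleteEdges {s(u, v)}).Reachable q u ↔ q ∉ S := by
  constructor
  · rintro ⟨w⟩ hq
    obtain ⟨d, -, hd₁, hd₂⟩ := w.exists_boundary_dart S hq hu
    obtain ⟨hadj, hne⟩ := deleteEdges_adj.1 d.adj
    obtain ⟨h₂, h₁⟩ := hcross _ _ hadj.symm hd₂ hd₁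
    exact hne (by rw [h₁, h₂, Sym2.eq_swap]; rfl)
  · intro hq
    -- walking back from `q`, every excursion into `S` enters and leaves through `u`
    suffices H : ∀ y z (w : G.Walk y z), z ∉ S → (G.deleteEdges {s(u, v)}).Reachable
        (if y ∈ S then u else y) z by
      simpa [hu] using (H u q (hG.preconnected u q).some hq).symm
    intro y z w hz
    induction w with
    | nil => simp [hz]
    | @cons y y' _ hadj _ ih =>
      replace ih := ih hz
      by_cases hy : y ∈ S <;> by_cases hy' : y' ∈ S <;>
        simp only [hy, hy', if_true, if_false] at ih ⊢
      · exact ih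
      · rwa [(hcross _ _ hadj.symm hy' hy).1] at ih
      · rwa [(hcross _ _ hadj hy hy').1]
      · refine (deleteEdges_adj.2 ⟨hadj, ?_⟩).reachable.trans ih
        rintro h
        rcases Sym2.eq_iff.1 h with ⟨-, rfl⟩ | ⟨rfl, -⟩ <;> contradiction

theorem reachable_deleteEdges_iff_mem (hG : G.Connected) (hu : u ∉ S) (hv : v ∈ S)
    (hcross : ∀ x y, G.Adj x y → x ∉ S → y ∈ S → x = u ∧ y = v) (q : V) :
    (G.deleteEdges {s(u, v)}).Reachable q v ↔ q ∈ S := by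
  rw [Sym2.eq_swap, ← Set.notMem_compl_iff]
  exact reachable_deleteEdges_iff_notMem (S := Sᶜ) hG (Set.notMem_compl_iff.2 hv) hu
    (fun x y hxy hx hy => (hcross y x hxy.symm hy (Set.notMem_compl_iff.1 hx)).symm) q

theorem isBridge_of_crossing (hG : G.Connected) (hu : u ∉ S) (hv : v ∈ S)
    (hcross : ∀ x y, G.Adj x y → x ∉ S → y ∈ S → x = u ∧ y = v) : G.IsBridge s(u, v) :=
  isBridge_iff.2 fun h => (reachable_deleteEdges_iff_notMem hG hu hv hcross v).1 h.symm hv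

end SimpleGraph

namespace STree

variable {Γ : Type}

theorem one_le_leafCount : ∀ t : STree Γ, 1 ≤ t.leafCount
  | .leaf _ => le_rfl
  | .node _ l _ => l.one_le_leafCount.trans (Nat.le_add_right _ _)

/-- The subtree at a position, given as the root-first list of directions (`true` = right),
together with the number of leaves to its left. -/
def subtreeAt : STree Γ → List Bool → Option (STree Γ × ℕ)
  | t, [] => some (t, 0)
  | .leaf _, _ :: _ => none
  | .node _ l _, false :: p => l.subtreeAt p
  | .node _ l r, true :: p => (r.subtreeAt p).map fun x => (x.1, l.leafCount + x.2)

@[simp]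
theorem subtreeAt_nil (t : STree Γ) : t.subtreeAt [] = some (t, 0) := by
  cases t <;> rfl

def leafPos : STree Γ → ℕ → List Bool
  | .leaf _, _ => []
  | .node _ l r, m =>
      if m < l.leafCount then false :: l.leafPos m else true :: r.leafPos (m - l.leafCount)

theorem subtreeAt_append : ∀ (t : STree Γ) (p q : List Bool),
    t.subtreeAt (p ++ q) =
      (t.subtreeAt p).bind fun x => (x.1.subtreeAt q).map fun y => (y.1, x.2 + y.2)
  | t, [], q => by simp
  | .leaf _, _ :: _, _ => rfl
  | .node _ l _, false :: p, q => by simp [subtreeAt, subtreeAt_append l p q]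
  | .node _ l r, true :: p, q => by
    simp [subtreeAt, subtreeAt_append r p q, Option.map_bind, Option.bind_map,
      Function.comp_def, Nat.add_assoc]

theorem subtreeAt_le : ∀ {t s : STree Γ} {p : List Bool} {k : ℕ},
    t.subtreeAt p = some (s, k) → k + s.leafCount ≤ t.leafCount ∧ p.length < t.leafCount
  | t, s, [], k, h => by
    obtain ⟨rfl, rfl⟩ : t = s ∧ 0 = k := by simpa [subtreeAt] using h
    exact ⟨by simp, t.one_le_leafCount⟩
  | .leaf _, _, _ :: _, _, h => by simp [subtreeAt] at h
  | .node _ l r, _, false :: _, _, h => by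
    have := subtreeAt_le (t := l) h
    have := r.one_le_leafCount
    simp only [leafCount, List.length_cons]
    omega
  | .node _ l r, _, true :: _, _, h => by
    obtain ⟨k', h', rfl⟩ : ∃ k', r.subtreeAt _ = some (_, k') ∧ l.leafCount + k' = _ := by
      simpa [subtreeAt] using h
    have := subtreeAt_le h'
    have := l.one_le_leafCount
    simp only [leafCount, List.length_cons]
    omega

theorem subtreeAt_leafPos : ∀ (t : STree Γ) {m : ℕ}, m < t.leafCount →
    ∃ γ, t.subtreeAt (t.leafPos m) = some (.leaf γ, m)
  | .leaf γ, m, hm => ⟨γ, by simp_all [leafCount, leafPos]⟩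
  | .node _ l r, m, hm => by
    by_cases hl : m < l.leafCount
    · simpa [leafPos, hl, subtreeAt] using subtreeAt_leafPos l hl
    · simp only [leafCount] at hm
      obtain ⟨γ, hγ⟩ := subtreeAt_leafPos r (m := m - l.leafCount) (by omega)
      exact ⟨γ, by simp [leafPos, hl, subtreeAt, hγ]; omega⟩

theorem leafPos_of_subtreeAt : ∀ {t : STree Γ} {p : List Bool} {γ : Γ} {m : ℕ},
    t.subtreeAt p = some (.leaf γ, m) → t.leafPos m = p
  | t, [], γ, m, h => by
    obtain ⟨rfl, rfl⟩ : t = .leaf γ ∧ 0 = m := by simpa [subtreeAt] using h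
    rfl
  | .leaf _, _ :: _, _, _, h => by simp [subtreeAt] at h
  | .node _ l r, false :: _, _, m, h => by
    have := (subtreeAt_le (t := l) h).1
    simp only [leafCount] at this
    simp [leafPos, show m < l.leafCount by omega, leafPos_of_subtreeAt (t := l) h]
  | .node _ l r, true :: _, _, _, h => by
    obtain ⟨k', h', rfl⟩ : ∃ k', r.subtreeAt _ = some (_, k') ∧ l.leafCount + k' = _ := by
      simpa [subtreeAt] using h
    simp [leafPos, leafPos_of_subtreeAt h']

theorem prefix_leafPos_iff : ∀ {t s : STree Γ} {p : List Bool} {k m : ℕ},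
    t.subtreeAt p = some (s, k) → m < t.leafCount →
    (p <+: t.leafPos m ↔ k ≤ m ∧ m < k + s.leafCount)
  | t, s, [], k, m, h, hm => by
    obtain ⟨rfl, rfl⟩ : t = s ∧ 0 = k := by simpa [subtreeAt] using h
    simpa using hm
  | .leaf _, _, _ :: _, _, _, h, _ => by simp [subtreeAt] at h
  | .node _ l r, s, false :: _, k, m, h, hm => by
    have := (subtreeAt_le (t := l) h).1
    by_cases hl : m < l.leafCount
    · simpa [leafPos, hl] using prefix_leafPos_iff (t := l) h hl
    · simp [leafPos, hl]
      omega
  | .node _ l r, s, true :: _, _, m, h, hm => by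
    obtain ⟨k', h', rfl⟩ : ∃ k', r.subtreeAt _ = some (_, k') ∧ l.leafCount + k' = _ := by
      simpa [subtreeAt] using h
    by_cases hl : m < l.leafCount
    · simp [leafPos, hl]
      omega
    · simp only [leafCount] at hm
      simp only [leafPos, if_neg hl, List.cons_prefix_cons, true_and,
        prefix_leafPos_iff h' (by omega : m - l.leafCount < r.leafCount)]
      omega

def parentPos : List Bool → List Bool
  | [b] => [!b]
  | p => p.dropLast

theorem parentPos_append_singleton {p : List Bool} (hp : p ≠ []) (b : Bool) :
    parentPos (p ++ [b]) = p := by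
  obtain ⟨c, p, rfl⟩ := List.exists_cons_of_ne_nil hp
  simp only [parentPos, List.cons_append]
  split
  · simp_all
  · rw [← List.cons_append, List.dropLast_concat]

theorem parentPos_ne_self {p : List Bool} (hp : p ≠ []) : parentPos p ≠ p := by
  rcases List.eq_nil_or_concat' p with rfl | ⟨q, b, rfl⟩
  · exact absurd rfl hp
  rcases eq_or_ne q [] with rfl | hq
  · cases b <;> simp [parentPos]
  · rw [parentPos_append_singleton hq]
    exact fun h => by simpa using congrArg List.length h

theorem parentPos_ne_nil {p : List Bool} (hp : p ≠ []) : parentPos p ≠ [] := by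
  rcases List.eq_nil_or_concat' p with rfl | ⟨q, b, rfl⟩
  · exact absurd rfl hp
  rcases eq_or_ne q [] with rfl | hq
  · simp [parentPos]
  · rwa [parentPos_append_singleton hq]

theorem length_parentPos_le (p : List Bool) : (parentPos p).length ≤ p.length := by
  rcases List.eq_nil_or_concat' p with rfl | ⟨q, b, rfl⟩
  · rfl
  rcases eq_or_ne q [] with rfl | hq
  · rfl
  · simp [parentPos_append_singleton hq]

theorem eq_of_prefix_singleton {c : List Bool} {b : Bool} (hc : c ≠ []) (h : c <+: [b]) :
    c = [b] :=
  ((List.prefix_concat_iff (l₂ := [])).1 h).resolve_right fun h => hc (List.prefix_nil.1 h)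

theorem eq_or_prefix_parentPos_of_prefix {c p : List Bool} (hc : c ≠ []) (h : c <+: p) :
    c = p ∨ c <+: parentPos p := by
  rcases List.eq_nil_or_concat' p with rfl | ⟨q, b, rfl⟩
  · exact absurd (List.prefix_nil.1 h) hc
  rcases eq_or_ne q [] with rfl | hq
  · exact Or.inl (eq_of_prefix_singleton hc h)
  · rwa [parentPos_append_singleton hq, ← List.prefix_concat_iff]

theorem parentPos_prefix_or_eq_singleton (p : List Bool) : parentPos p <+: p ∨ ∃ b, p = [b] := by
  rcases List.eq_nil_or_concat' p with rfl | ⟨q, b, rfl⟩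
  · exact Or.inl List.nil_prefix
  rcases eq_or_ne q [] with rfl | hq
  · exact Or.inr ⟨b, rfl⟩
  · rw [parentPos_append_singleton hq]
    exact Or.inl (List.prefix_append _ _)

theorem not_prefix_parentPos {c : List Bool} (hc : c ≠ []) : ¬c <+: parentPos c :=
  fun h => parentPos_ne_self hc (h.eq_of_length_le (length_parentPos_le c)).symm

theorem isSome_subtreeAt_of_append {t : STree Γ} {p q : List Bool}
    (h : (t.subtreeAt (p ++ q)).isSome) : (t.subtreeAt p).isSome := by
  rw [subtreeAt_append] at h
  cases hp : t.subtreeAt p <;> simp_all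

theorem isSome_subtreeAt_append_singleton {t s : STree Γ} {p : List Bool} {k : ℕ}
    (h : t.subtreeAt p = some (s, k)) (b : Bool) :
    (t.subtreeAt (p ++ [b])).isSome ↔ ∃ a l r, s = .node a l r := by
  rw [subtreeAt_append, h]
  cases s <;> cases b <;> simp [subtreeAt]

theorem isSome_subtreeAt_parentPos {t : STree Γ} {p : List Bool} (hp : (t.subtreeAt p).isSome) :
    (t.subtreeAt (parentPos p)).isSome := by
  rcases List.eq_nil_or_concat' p with rfl | ⟨q, b, rfl⟩
  · exact hp
  rcases eq_or_ne q [] with rfl | hq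
  · cases t <;> cases b <;> simp_all [subtreeAt, parentPos]
  · rw [parentPos_append_singleton hq]
    exact isSome_subtreeAt_of_append hp

abbrev DecompVertex (t : STree Γ) : Type := {p : List Bool // p ≠ [] ∧ (t.subtreeAt p).isSome}

namespace DecompVertex

variable {t : STree Γ}

instance : Finite (DecompVertex t) :=
  (List.finite_length_le Bool t.leafCount).subset (fun p hp => by
    obtain ⟨⟨s, k⟩, h⟩ := Option.isSome_iff_exists.1 hp.2
    exact (subtreeAt_le h).2.le) |>.to_subtype

def parent (p : DecompVertex t) : DecompVertex t :=
  ⟨parentPos p.1, parentPos_ne_nil p.2.1, isSome_subtreeAt_parentPos p.2.2⟩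

theorem parent_ne_self (p : DecompVertex t) : p.parent ≠ p :=
  fun h => parentPos_ne_self p.2.1 (congrArg Subtype.val h)

noncomputable instance : Fintype (DecompVertex t) := Fintype.ofFinite _

end DecompVertex

/-- The decomposition tree of `t`: its non-root positions, each joined to its parent, the two
children of the root being joined to each other. -/
def decompGraph (t : STree Γ) : SimpleGraph (DecompVertex t) :=
  SimpleGraph.fromRel fun p q => q = p.parent

theorem decompGraph_adj {t : STree Γ} {p q : DecompVertex t} :
    (decompGraph t).Adj p q ↔ q = p.parent ∨ p = q.parent := by
  rw [decompGraph, SimpleGraph.fromRel_adj, and_iff_right_iff_imp]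
  rintro (rfl | rfl)
  exacts [p.parent_ne_self.symm, q.parent_ne_self]

theorem decompGraph_adj_iff_append {t : STree Γ} {p q : DecompVertex t} :
    (decompGraph t).Adj p q ↔ q = p.parent ∨ ∃ b, q.1 = p.1 ++ [b] := by
  rw [decompGraph_adj]
  refine ⟨fun h => h.elim Or.inl fun h => ?_, fun h => h.imp_right fun ⟨b, hb⟩ => ?_⟩
  · obtain ⟨q', b, hq⟩ := (List.eq_nil_or_concat' q.1).resolve_left q.2.1
    have hp : p.1 = parentPos q.1 := congrArg Subtype.val h
    rcases eq_or_ne q' [] with rfl | hq'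
    · refine Or.inl (Subtype.ext ?_)
      change q.1 = parentPos p.1
      rw [hp, hq]
      simp [parentPos]
    · exact Or.inr ⟨b, by rw [hp, hq, parentPos_append_singleton hq']⟩
  · refine Subtype.ext ?_
    change p.1 = parentPos q.1
    rw [hb, parentPos_append_singleton p.2.1]

theorem decompGraph_crossing {t : STree Γ} (c : DecompVertex t) {x y : DecompVertex t}
    (hxy : (decompGraph t).Adj x y) (hx : ¬c.1 <+: x.1) (hy : c.1 <+: y.1) :
    x = c.parent ∧ y = c := by
  rcases decompGraph_adj.1 hxy with rfl | rfl
  · obtain ⟨b, hb⟩ := (parentPos_prefix_or_eq_singleton x.1).resolve_left fun h => hx (hy.trans h)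
    have hc : c.1 = [!b] := by
      change c.1 <+: parentPos x.1 at hy
      rw [hb] at hy
      exact eq_of_prefix_singleton c.2.1 hy
    refine ⟨Subtype.ext ?_, Subtype.ext ?_⟩
    · change x.1 = parentPos c.1
      simp [hb, hc, parentPos]
    · change parentPos x.1 = c.1
      simp [hb, hc, parentPos]
  · obtain rfl : y = c :=
      Subtype.ext ((eq_or_prefix_parentPos_of_prefix c.2.1 hy).resolve_right hx).symm
    exact ⟨rfl, rfl⟩

variable {t : STree Γ}

theorem exists_reachable_length_eq_one (p : DecompVertex t) :
    ∃ q : DecompVertex t, q.1.length = 1 ∧ (decompGraph t).Reachable p q := by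
  induction hn : p.1.length using Nat.strong_induction_on generalizing p with
  | _ n ih =>
    rcases parentPos_prefix_or_eq_singleton p.1 with h | ⟨b, hb⟩
    · have hlt : p.parent.1.length < n :=
        hn ▸ lt_of_le_of_ne h.length_le fun h' => parentPos_ne_self p.2.1 (h.eq_of_length h')
      obtain ⟨q, hq, hpq⟩ := ih _ hlt p.parent rfl
      exact ⟨q, hq, (decompGraph_adj.2 (Or.inl rfl)).reachable.trans hpq⟩
    · exact ⟨p, by simp [hb], .rfl⟩

theorem decompGraph_preconnected : (decompGraph t).Preconnected := by
  have hroot : ∀ p q : DecompVertex t, p.1.length = 1 → q.1.length = 1 →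
      (decompGraph t).Reachable p q := by
    intro p q hp hq
    obtain ⟨b, hb⟩ := List.length_eq_one_iff.1 hp
    obtain ⟨c, hc⟩ := List.length_eq_one_iff.1 hq
    by_cases hbc : b = c
    · rw [Subtype.ext (hb.trans (hbc ▸ hc.symm))]
    · refine (decompGraph_adj.2 (Or.inl (Subtype.ext ?_))).reachable
      change q.1 = parentPos p.1
      cases b <;> cases c <;> simp_all [parentPos]
  intro p q
  obtain ⟨p', hp', hpp'⟩ := exists_reachable_length_eq_one p
  obtain ⟨q', hq', hqq'⟩ := exists_reachable_length_eq_one q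
  exact hpp'.trans ((hroot p' q' hp' hq').trans hqq'.symm)

theorem decompGraph_connected (ht : 1 < t.leafCount) : (decompGraph t).Connected := by
  refine (SimpleGraph.connected_iff _).2 ⟨decompGraph_preconnected, ?_⟩
  cases t with
  | leaf => simp [leafCount] at ht
  | node => exact ⟨⟨[false], by simp, by simp [subtreeAt]⟩⟩

theorem degree_decompGraph_of_leaf {p : DecompVertex t} {γ : Γ} {k : ℕ}
    (h : t.subtreeAt p.1 = some (.leaf γ, k)) : (decompGraph t).degree p = 1 := by
  rw [← SimpleGraph.card_neighborFinset_eq_degree, Finset.card_eq_one]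
  refine ⟨p.parent, Finset.ext fun w => ?_⟩
  rw [SimpleGraph.mem_neighborFinset, decompGraph_adj_iff_append, Finset.mem_singleton,
    or_iff_left]
  rintro ⟨b, hb⟩
  simpa [hb, isSome_subtreeAt_append_singleton h] using w.2.2

theorem degree_decompGraph_of_node {p : DecompVertex t} {a : Γ} {l r : STree Γ} {k : ℕ}
    (h : t.subtreeAt p.1 = some (.node a l r, k)) : (decompGraph t).degree p = 3 := by
  let child (b : Bool) : DecompVertex t :=
    ⟨p.1 ++ [b], by simp, (isSome_subtreeAt_append_singleton h b).2 ⟨a, l, r, rfl⟩⟩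
  have hparent (b : Bool) : p.parent ≠ child b := fun h' => by
    have := congrArg (List.length ∘ Subtype.val) h'
    have := length_parentPos_le p.1
    simp_all [DecompVertex.parent, child]
  rw [← SimpleGraph.card_neighborFinset_eq_degree, Finset.card_eq_three]
  refine ⟨p.parent, child false, child true, hparent false, hparent true, by simp [child],
    Finset.ext fun w => ?_⟩
  simp [decompGraph_adj_iff_append, child, Subtype.ext_iff]

theorem reachable_deleteEdges_iff_prefix (ht : 1 < t.leafCount) (c q : DecompVertex t) :
    ((decompGraph t).deleteEdges {s(c.parent, c)}).Reachable q c ↔ c.1 <+: q.1 :=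
  SimpleGraph.reachable_deleteEdges_iff_mem (S := {q : DecompVertex t | c.1 <+: q.1})
    (decompGraph_connected ht)
    (not_prefix_parentPos c.2.1) (List.prefix_refl _) (fun _ _ => decompGraph_crossing c) q

theorem reachable_deleteEdges_parent_iff (ht : 1 < t.leafCount) (c q : DecompVertex t) :
    ((decompGraph t).deleteEdges {s(c.parent, c)}).Reachable q c.parent ↔ ¬c.1 <+: q.1 :=
  SimpleGraph.reachable_deleteEdges_iff_notMem (S := {q : DecompVertex t | c.1 <+: q.1})
    (decompGraph_connected ht) (not_prefix_parentPos c.2.1) (List.prefix_refl _)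
    (fun _ _ => decompGraph_crossing c) q

theorem decompGraph_isTree (ht : 1 < t.leafCount) : (decompGraph t).IsTree := by
  refine ⟨decompGraph_connected ht, SimpleGraph.isAcyclic_iff_forall_adj_isBridge.2 ?_⟩
  have hbridge : ∀ c : DecompVertex t, (decompGraph t).IsBridge s(c.parent, c) := fun c =>
    SimpleGraph.isBridge_of_crossing (S := {q : DecompVertex t | c.1 <+: q.1})
      (decompGraph_connected ht)
      (not_prefix_parentPos c.2.1) (List.prefix_refl _) (fun _ _ => decompGraph_crossing c)
  intro v w hvw
  rcases decompGraph_adj.1 hvw with rfl | rfl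
  · rw [Sym2.eq_swap]
    exact hbridge v
  · exact hbridge w

end STree

section LeafBlock

variable {α Γ : Type} {E : Finset α} {t : STree Γ} (φ : {a // a ∈ E} ≃ Fin t.leafCount)

def leafBlock (k n : ℕ) : Finset α :=
  (E.attach.filter fun a => k ≤ (φ a : ℕ) ∧ (φ a : ℕ) < k + n).map (Function.Embedding.subtype _)

variable {φ}

theorem mem_leafBlock {a : α} {k n : ℕ} :
    a ∈ leafBlock φ k n ↔ ∃ h : a ∈ E, k ≤ (φ ⟨a, h⟩ : ℕ) ∧ (φ ⟨a, h⟩ : ℕ) < k + n := by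
  simp [leafBlock]

theorem leafBlock_subset (k n : ℕ) : leafBlock φ k n ⊆ E :=
  fun _ ha => (mem_leafBlock.1 ha).1

theorem leafBlock_zero_leafCount : leafBlock φ 0 t.leafCount = E :=
  (leafBlock_subset _ _).antisymm fun a ha => mem_leafBlock.2 ⟨ha, by simp⟩

theorem symm_mem_leafBlock_iff (m : Fin t.leafCount) {k n : ℕ} :
    (φ.symm m).1 ∈ leafBlock φ k n ↔ k ≤ m ∧ (m : ℕ) < k + n := by
  simp [mem_leafBlock]

end LeafBlock

namespace STree

variable {Γ : Type} {t : STree Γ}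

def leafVertex (ht : 1 < t.leafCount) (m : Fin t.leafCount) : DecompVertex t :=
  ⟨t.leafPos m, fun h0 => by
    obtain ⟨γ, h⟩ := t.subtreeAt_leafPos m.2
    obtain ⟨rfl, -⟩ : t = .leaf γ ∧ 0 = (m : ℕ) := by simpa [h0, subtreeAt] using h
    simp [leafCount] at ht,
   by obtain ⟨γ, h⟩ := t.subtreeAt_leafPos m.2; simp [h]⟩

theorem leafVertex_injective (ht : 1 < t.leafCount) : Function.Injective (leafVertex ht) := by
  intro m m' h
  obtain ⟨γ, hγ⟩ := t.subtreeAt_leafPos m.2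
  obtain ⟨γ', hγ'⟩ := t.subtreeAt_leafPos m'.2
  have := congrArg (fun v : DecompVertex t => t.subtreeAt v.1) h
  simp only [leafVertex, hγ, hγ', Option.some.injEq, Prod.mk.injEq] at this
  exact Fin.ext this.2

theorem degree_leafVertex (ht : 1 < t.leafCount) (m : Fin t.leafCount) :
    (decompGraph t).degree (leafVertex ht m) = 1 :=
  degree_decompGraph_of_leaf (t.subtreeAt_leafPos m.2).choose_spec

theorem exists_leafVertex_eq (ht : 1 < t.leafCount) {v : DecompVertex t}
    (hv : (decompGraph t).degree v = 1) : ∃ m, leafVertex ht m = v := by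
  obtain ⟨⟨s, k⟩, h⟩ := Option.isSome_iff_exists.1 v.2.2
  cases s with
  | node => simp [degree_decompGraph_of_node h] at hv
  | leaf γ =>
    have hk := (subtreeAt_le h).1
    exact ⟨⟨k, by simp only [leafCount] at hk; omega⟩, Subtype.ext (leafPos_of_subtreeAt h)⟩

variable {α : Type} {E : Finset α}

noncomputable def decomp (ht : 1 < t.leafCount) (φ : {a // a ∈ E} ≃ Fin t.leafCount) :
    Decomp α E where
  V := DecompVertex t
  G := decompGraph t
  isTree := decompGraph_isTree ht
  subcubic v := by
    obtain ⟨⟨s, k⟩, h⟩ := Option.isSome_iff_exists.1 v.2.2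
    cases s with
    | leaf => exact Or.inl (degree_decompGraph_of_leaf h)
    | node => exact Or.inr (degree_decompGraph_of_node h)
  leaf a := if h : a ∈ E then leafVertex ht (φ ⟨a, h⟩) else leafVertex ht ⟨0, by omega⟩
  leaf_degree a ha := by
    rw [dif_pos ha]
    exact degree_leafVertex ht _
  leaf_injOn a ha b hb hab := by
    simp only [Finset.mem_coe] at ha hb
    simp only [dif_pos ha, dif_pos hb] at hab
    simpa using φ.injective (leafVertex_injective ht hab)
  leaf_surj v hv := by
    obtain ⟨m, rfl⟩ := exists_leafVertex_eq ht hv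
    exact ⟨φ.symm m, (φ.symm m).2, by simp⟩

theorem decomp_displays (ht : 1 < t.leafCount) (φ : {a // a ∈ E} ≃ Fin t.leafCount)
    {U : Finset α} (hU : (decomp ht φ).Displays U) :
    ∃ p s k, t.subtreeAt p = some (s, k) ∧
      (U = leafBlock φ k s.leafCount ∨ U = E \ leafBlock φ k s.leafCount) := by
  dsimp only [Decomp.Displays, decomp] at hU
  obtain ⟨hUE, u, v, huv, hiff⟩ := hU
  replace hiff : ∀ a (ha : a ∈ E), a ∈ U ↔
      ((decompGraph t).deleteEdges {s(u, v)}).Reachable (leafVertex ht (φ ⟨a, ha⟩)) u :=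
    fun a ha => by simpa only [dif_pos ha] using hiff a ha
  have below (c : DecompVertex t) {s k} (hc : t.subtreeAt c.1 = some (s, k)) {a} (ha : a ∈ E) :
      c.1 <+: (leafVertex ht (φ ⟨a, ha⟩)).1 ↔ a ∈ leafBlock φ k s.leafCount := by
    rw [leafVertex, prefix_leafPos_iff hc (φ ⟨a, ha⟩).2, mem_leafBlock]
    exact ⟨fun h => ⟨ha, h⟩, fun ⟨_, h⟩ => h⟩
  rcases decompGraph_adj.1 huv with rfl | rfl
  · obtain ⟨⟨s, k⟩, hc⟩ := Option.isSome_iff_exists.1 u.2.2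
    refine ⟨u.1, s, k, hc, Or.inl (Finset.ext fun a => ?_)⟩
    by_cases ha : a ∈ E
    · rw [hiff a ha, ← below u hc ha, Sym2.eq_swap]
      exact reachable_deleteEdges_iff_prefix ht u _
    · exact iff_of_false (fun h => ha (hUE h)) fun h => ha (leafBlock_subset _ _ h)
  · obtain ⟨⟨s, k⟩, hc⟩ := Option.isSome_iff_exists.1 v.2.2
    refine ⟨v.1, s, k, hc, Or.inr (Finset.ext fun a => ?_)⟩
    by_cases ha : a ∈ E
    · rw [hiff a ha, Finset.mem_sdiff, ← below v hc ha, and_iff_right ha]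
      exact reachable_deleteEdges_parent_iff ht v _
    · exact iff_of_false (fun h => ha (hUE h)) fun h => ha (Finset.mem_sdiff.1 h).1

end STree

theorem STree.relabel_congr {Γ Γ' : Type} {f f' : ℕ → Γ → Γ'} (g : Γ → Γ') :
    ∀ (s : STree Γ) (k : ℕ), (∀ m, k ≤ m → m < k + s.leafCount → f m = f' m) →
      s.relabel f g k = s.relabel f' g k
  | .leaf _, k, h => by simp [relabel, h k le_rfl (by simp [leafCount])]
  | .node _ l r, k, h => by
    simp only [leafCount] at h
    rw [relabel, relabel, relabel_congr g l k fun m h₁ h₂ => h m h₁ (by omega),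
      relabel_congr g r _ fun m h₁ h₂ => h m (by omega) (by omega)]

theorem TreeAut.run_relabel_congr {Γ Γ' Q : Type} (A : TreeAut Γ' Q) {f f' : ℕ → Γ → Γ'}
    (g : Γ → Γ') : ∀ {t s : STree Γ} {p : List Bool} {k₀ k : ℕ}, t.subtreeAt p = some (s, k) →
    (∀ m, m < k₀ + k ∨ k₀ + k + s.leafCount ≤ m → f m = f' m) →
    A.run (s.relabel f g (k₀ + k)) = A.run (s.relabel f' g (k₀ + k)) →
    A.run (t.relabel f g k₀) = A.run (t.relabel f' g k₀)
  | t, s, [], k₀, k, h, _, hs => by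
    obtain ⟨rfl, rfl⟩ : t = s ∧ 0 = k := by simpa [STree.subtreeAt] using h
    exact hs
  | .leaf _, _, _ :: _, _, _, h, _, _ => by simp [STree.subtreeAt] at h
  | .node _ l r, s, false :: _, k₀, k, h, hout, hs => by
    have := (STree.subtreeAt_le (t := l) h).1
    rw [STree.relabel, STree.relabel, run, run, run_relabel_congr A g (t := l) h hout hs,
      STree.relabel_congr g r _ fun m h₁ _ => hout m (Or.inr (by omega))]
  | .node _ l r, s, true :: _, k₀, _, h, hout, hs => by
    obtain ⟨k', h', rfl⟩ : ∃ k', r.subtreeAt _ = some (_, k') ∧ l.leafCount + k' = _ := by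
      simpa [STree.subtreeAt] using h
    rw [← Nat.add_assoc] at hout hs
    rw [STree.relabel, STree.relabel, run, run,
      run_relabel_congr A g (k₀ := k₀ + l.leafCount) h' hout hs,
      STree.relabel_congr g l _ fun m _ h₂ => hout m (Or.inl (by omega))]

section SystemOf

variable {α Γ Q : Type} (i : ℕ) (A : TreeAut (EncAlph Γ {i}) Q) {E : Finset α} {t : STree Γ}
  (φ : {a // a ∈ E} ≃ Fin t.leafCount)

/-- The leaf labels of `enc E t φ {i} fun _ => Y`. -/
noncomputable def encLabel (Y : Finset α) (m : ℕ) (γ : Γ) : EncAlph Γ {i} :=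
  Sum.inr (γ, fun _ => if h : m < t.leafCount then decide ((φ.symm ⟨m, h⟩).1 ∈ Y) else false)

theorem encLabel_congr {Y Y' : Finset α} {m : ℕ}
    (h : ∀ hm : m < t.leafCount, (φ.symm ⟨m, hm⟩).1 ∈ Y ↔ (φ.symm ⟨m, hm⟩).1 ∈ Y') :
    encLabel i φ Y m = encLabel i φ Y' m := by
  funext γ
  by_cases hm : m < t.leafCount <;> simp [encLabel, hm, h]

theorem isSummary_systemOf {p : List Bool} {s : STree Γ} {k : ℕ}
    (hp : t.subtreeAt p = some (s, k)) :
    (systemOf i A E t φ).IsSummary (leafBlock φ k s.leafCount)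
      fun Y => A.run (s.relabel (encLabel i φ Y) Sum.inl k) := by
  constructor
  · intro Y Y' hY
    refine congrArg A.run (STree.relabel_congr _ s k fun m h₁ h₂ => encLabel_congr i φ fun hm => ?_)
    have hmem := (symm_mem_leafBlock_iff (φ := φ) ⟨m, hm⟩).2 ⟨h₁, h₂⟩
    simpa [hmem] using Finset.ext_iff.1 hY (φ.symm ⟨m, hm⟩).1
  · intro Y Y' hY hY' hYL hr
    have hrun : A.run (t.relabel (encLabel i φ Y) Sum.inl 0) =
        A.run (t.relabel (encLabel i φ Y') Sum.inl 0) := by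
      refine TreeAut.run_relabel_congr A Sum.inl hp (fun m hm => encLabel_congr i φ fun hm' => ?_)
        (by simpa using hr)
      have hmem : (φ.symm ⟨m, hm'⟩).1 ∉ leafBlock φ k s.leafCount := by
        simp only [symm_mem_leafBlock_iff, not_and, not_lt]
        omega
      simpa [hmem] using Finset.ext_iff.1 hYL (φ.symm ⟨m, hm'⟩).1
    change Y ⊆ E ∧ A.Accepts (t.relabel (encLabel i φ Y) Sum.inl 0) ↔
      Y' ⊆ E ∧ A.Accepts (t.relabel (encLabel i φ Y') Sum.inl 0)
    rw [TreeAut.Accepts, TreeAut.Accepts, hrun]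
    exact and_congr (iff_of_true hY hY') Iff.rfl

theorem dw_systemOf_le [Fintype Q] :
    (systemOf i A E t φ).dw ≤ max (Nat.card (Finset Q)) (Nat.card (Finset Q → Prop)) := by
  have hblock {p s k} (hp : t.subtreeAt p = some (s, k)) (U : Finset α)
      (hU : U = leafBlock φ k s.leafCount ∨ U = E \ leafBlock φ k s.leafCount) :
      (systemOf i A E t φ).numClasses U ≤
        max (Nat.card (Finset Q)) (Nat.card (Finset Q → Prop)) := by
    rcases hU with rfl | rfl
    · exact ((isSummary_systemOf i A φ hp).numClasses_le (leafBlock_subset _ _)).trans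
        (le_max_left _ _)
    · exact (isSummary_systemOf i A φ hp).numClasses_sdiff_le.trans (le_max_right _ _)
  rcases lt_or_ge 1 t.leafCount with ht | ht
  · refine SetSystem.dw_le_of_decomp (STree.decomp ht φ) fun U hU => ?_
    obtain ⟨p, s, k, hp, hU⟩ := STree.decomp_displays ht φ hU
    exact hblock hp U hU
  · refine SetSystem.dw_le_of_forall_subset fun U hU => hblock (t.subtreeAt_nil) U ?_
    have hE : E.card ≤ 1 := by simpa using (Fintype.card_congr φ).trans_le (by simpa using ht)
    rw [leafBlock_zero_leafCount, Finset.sdiff_self]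
    rcases U.eq_empty_or_nonempty with rfl | ⟨a, ha⟩
    · exact Or.inr rfl
    · exact Or.inl (Finset.Subset.antisymm hU fun b hb =>
        Finset.card_le_one.1 hE a (hU ha) b hb ▸ ha)

end SystemOf

/-- Lemma `redcap`: an automatic class of set-systems has bounded
decomposition-width. -/
theorem statement_10 {α : Type} (𝓜 : Set (SetSystem α)) (h : Automatic 𝓜) :
    ∃ K : ℕ, ∀ S ∈ 𝓜, S.dw ≤ K := by
  obtain ⟨Γ, _, Q, _, i, A, -, hA⟩ := h
  refine ⟨max (Nat.card (Finset Q)) (Nat.card (Finset Q → Prop)), fun S hS => ?_⟩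
  obtain ⟨t, φ, hSA⟩ := hA S hS
  rw [hSA]
  exact dw_systemOf_le i A φ
end
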